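/- arXiv:2410.03880 — 3 statements merged into one kernel-verified Lean document; each statement's English description precedes it below -/
import Mathlib

section
/- Let A_1,…,A_d be Hermitian and B non-Hermitian matrices in M_n(ℂ). If σ_min(L_{(0,0)}(A,B)) = ε₁ and Σ_{i<k}‖[A_i,A_k]‖ + ‖F‖ ≤ ε₂ (where F is the cross-term matrix in the expansion of L†L), then there exists a unit vector ψ ∈ ℂ^n such that either √(Σ_i ‖A_iψ‖² + ‖Bψ‖²) ≤ √(2m)·√(ε₁² + ε₂) or √(Σ_i ‖A_iψ‖² + ‖B†ψ‖²) ≤ √(2m)·√(ε₁² + ε₂). -/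
open Matrix Kronecker

/-- Operator (spectral) norm of a complex matrix. -/
noncomputable def opNorm {m n : Type*} [Fintype m] [Fintype n] [DecidableEq n]
    (A : Matrix m n ℂ) : ℝ :=
  ‖LinearMap.toContinuousLinearMap (Matrix.toEuclideanLin A)‖

/-- Smallest singular value of a complex matrix. -/
noncomputable def sigMin {m n : Type*} [Fintype m] [Fintype n] [DecidableEq n]
    (A : Matrix m n ℂ) : ℝ :=
  sInf {r : ℝ | ∃ ψ : EuclideanSpace ℂ n, ‖ψ‖ = 1 ∧ r = ‖Matrix.toEuclideanLin A ψ‖}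

/-- The non-Hermitian spectral localizer at probe site `(0,0)`. -/
noncomputable def localizer0 {n d m : ℕ}
    (A : Fin d → Matrix (Fin n) (Fin n) ℂ)
    (Γ : Fin d → Matrix (Fin m ⊕ Fin m) (Fin m ⊕ Fin m) ℂ)
    (B : Matrix (Fin n) (Fin n) ℂ) :
    Matrix (Fin n × (Fin m ⊕ Fin m)) (Fin n × (Fin m ⊕ Fin m)) ℂ :=
  (∑ i, A i ⊗ₖ Γ i)
    + B ⊗ₖ (Matrix.fromBlocks 1 0 0 0)
    + Bᴴ ⊗ₖ (Matrix.fromBlocks 0 0 0 (-1))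

/-- The cross-term matrix `F` in the expansion of `L†L` at probe site `(0,0)`:
`F = Σ_i A_iB ⊗ Γ_i diag(I_m,0) + h.c. + Σ_i A_iB† ⊗ Γ_i diag(0,−I_m) + h.c.`. -/
noncomputable def crossF0 {n d m : ℕ}
    (A : Fin d → Matrix (Fin n) (Fin n) ℂ)
    (Γ : Fin d → Matrix (Fin m ⊕ Fin m) (Fin m ⊕ Fin m) ℂ)
    (B : Matrix (Fin n) (Fin n) ℂ) :
    Matrix (Fin n × (Fin m ⊕ Fin m)) (Fin n × (Fin m ⊕ Fin m)) ℂ :=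
  (∑ i, (A i * B) ⊗ₖ (Γ i * Matrix.fromBlocks 1 0 0 0))
    + (∑ i, (A i * B) ⊗ₖ (Γ i * Matrix.fromBlocks 1 0 0 0))ᴴ
    + (∑ i, (A i * Bᴴ) ⊗ₖ (Γ i * Matrix.fromBlocks 0 0 0 (-1)))
    + (∑ i, (A i * Bᴴ) ⊗ₖ (Γ i * Matrix.fromBlocks 0 0 0 (-1)))ᴴ

/-! ### Auxiliary lemmas -/

section kronAlg

lemma kron_conjTranspose' {N S N' S' : Type*} (X : Matrix N N' ℂ) (Y : Matrix S S' ℂ) :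
    (X ⊗ₖ Y)ᴴ = Xᴴ ⊗ₖ Yᴴ := by
  ext ⟨x, s⟩ ⟨y, t⟩
  simp [conjTranspose_apply, Matrix.kroneckerMap_apply]

lemma kron_neg' {N S N' S' : Type*} (X : Matrix N N' ℂ) (Y : Matrix S S' ℂ) :
    X ⊗ₖ (-Y) = -(X ⊗ₖ Y) := by
  ext ⟨x, s⟩ ⟨y, t⟩; simp [Matrix.kroneckerMap_apply]

lemma sub_kron' {N S N' S' : Type*} (X X' : Matrix N N' ℂ) (Y : Matrix S S' ℂ) :
    (X - X') ⊗ₖ Y = X ⊗ₖ Y - X' ⊗ₖ Y := by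
  ext ⟨x, s⟩ ⟨y, t⟩; simp [Matrix.kroneckerMap_apply]; ring

lemma sum_swap_lt {d : ℕ} {β : Type*} [AddCommMonoid β] (f : Fin d × Fin d → β) :
    ∑ p ∈ Finset.univ.filter (fun p : Fin d × Fin d => p.2 < p.1), f p
      = ∑ p ∈ Finset.univ.filter (fun p : Fin d × Fin d => p.1 < p.2), f p.swap := by
  refine Finset.sum_nbij' (fun p => p.swap) (fun p => p.swap) ?_ ?_ ?_ ?_ ?_ <;>
    intro p hp <;> simp_all [Prod.swap]

lemma sum_prod_split {d : ℕ} {β : Type*} [AddCommMonoid β] (f : Fin d × Fin d → β) :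
    ∑ p : Fin d × Fin d, f p
      = (∑ i, f (i, i))
        + ∑ p ∈ Finset.univ.filter (fun p : Fin d × Fin d => p.1 < p.2), (f p + f p.swap) := by
  rw [← Finset.sum_filter_add_sum_filter_not Finset.univ
    (fun p : Fin d × Fin d => p.1 < p.2) f]
  rw [← Finset.sum_filter_add_sum_filter_not
    (Finset.univ.filter (fun p : Fin d × Fin d => ¬ p.1 < p.2))
    (fun p : Fin d × Fin d => p.1 = p.2) f]
  have e1 : (Finset.univ.filter (fun p : Fin d × Fin d => ¬ p.1 < p.2)).filter
      (fun p => p.1 = p.2) = Finset.univ.diag := by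
    ext p
    simp only [Finset.mem_filter, Finset.mem_univ, true_and, Finset.mem_diag, not_lt]
    constructor
    · rintro ⟨-, h⟩; exact h
    · intro h; exact ⟨le_of_eq h.symm, h⟩
  have e2 : (Finset.univ.filter (fun p : Fin d × Fin d => ¬ p.1 < p.2)).filter
      (fun p => ¬ p.1 = p.2) = Finset.univ.filter (fun p : Fin d × Fin d => p.2 < p.1) := by
    ext p
    simp only [Finset.mem_filter, Finset.mem_univ, true_and, not_lt]
    constructor
    · rintro ⟨h1, h2⟩; exact lt_of_le_of_ne h1 (fun h => h2 h.symm)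
    · intro h; exact ⟨h.le, fun h2 => absurd h (by rw [h2]; exact lt_irrefl _)⟩
  rw [e1, e2, Finset.sum_diag, sum_swap_lt, Finset.sum_add_distrib]
  abel

end kronAlg

section identity
variable {n d m : ℕ}
  (A : Fin d → Matrix (Fin n) (Fin n) ℂ)
  (Γ : Fin d → Matrix (Fin m ⊕ Fin m) (Fin m ⊕ Fin m) ℂ)
  (B : Matrix (Fin n) (Fin n) ℂ)

lemma LhL_expand (hA : ∀ i, (A i).IsHermitian) (hΓH : ∀ i, (Γ i).IsHermitian)
    (hΓsq : ∀ i, Γ i * Γ i = 1)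
    (hΓanti : ∀ i j, i ≠ j → Γ i * Γ j = -(Γ j * Γ i)) :
    (localizer0 A Γ B)ᴴ * localizer0 A Γ B
      = (∑ i, (A i * A i) ⊗ₖ (1 : Matrix (Fin m ⊕ Fin m) (Fin m ⊕ Fin m) ℂ))
        + (∑ p ∈ Finset.univ.filter (fun p : Fin d × Fin d => p.1 < p.2),
            (A p.1 * A p.2 - A p.2 * A p.1) ⊗ₖ (Γ p.1 * Γ p.2))
        + crossF0 A Γ B
        + (Bᴴ * B) ⊗ₖ (Matrix.fromBlocks 1 0 0 0)
        + (B * Bᴴ) ⊗ₖ (Matrix.fromBlocks 0 0 0 1) := by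
  set P : Matrix (Fin m ⊕ Fin m) (Fin m ⊕ Fin m) ℂ := Matrix.fromBlocks 1 0 0 0 with hP
  set Q' : Matrix (Fin m ⊕ Fin m) (Fin m ⊕ Fin m) ℂ := Matrix.fromBlocks 0 0 0 (-1) with hQ'
  set S : Matrix (Fin n × (Fin m ⊕ Fin m)) (Fin n × (Fin m ⊕ Fin m)) ℂ := ∑ i, A i ⊗ₖ Γ i with hS
  have hPh : Pᴴ = P := by rw [hP]; simp [Matrix.fromBlocks_conjTranspose]
  have hQ'h : Q'ᴴ = Q' := by rw [hQ']; simp [Matrix.fromBlocks_conjTranspose]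
  have hPP : P * P = P := by rw [hP]; simp [Matrix.fromBlocks_multiply]
  have hPQ : P * Q' = 0 := by rw [hP, hQ']; simp [Matrix.fromBlocks_multiply]
  have hQP : Q' * P = 0 := by rw [hP, hQ']; simp [Matrix.fromBlocks_multiply]
  have hQQ : Q' * Q' = Matrix.fromBlocks 0 0 0 1 := by
    rw [hQ']; simp [Matrix.fromBlocks_multiply]
  have hSadj : Sᴴ = S := by
    rw [hS, Matrix.conjTranspose_sum]
    exact Finset.sum_congr rfl fun i _ => by rw [kron_conjTranspose', (hA i).eq, (hΓH i).eq]
  have hL : localizer0 A Γ B = S + B ⊗ₖ P + Bᴴ ⊗ₖ Q' := rfl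
  have hLh : (localizer0 A Γ B)ᴴ = S + Bᴴ ⊗ₖ P + B ⊗ₖ Q' := by
    rw [hL, Matrix.conjTranspose_add, Matrix.conjTranspose_add, hSadj,
      kron_conjTranspose', kron_conjTranspose', hPh, hQ'h, Matrix.conjTranspose_conjTranspose]
  rw [hLh, hL]
  have expand : (S + Bᴴ ⊗ₖ P + B ⊗ₖ Q') * (S + B ⊗ₖ P + Bᴴ ⊗ₖ Q')
      = S * S
        + (S * (B ⊗ₖ P) + (Bᴴ ⊗ₖ P) * S)
        + (S * (Bᴴ ⊗ₖ Q') + (B ⊗ₖ Q') * S)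
        + ((Bᴴ ⊗ₖ P) * (B ⊗ₖ P) + (Bᴴ ⊗ₖ P) * (Bᴴ ⊗ₖ Q'))
        + ((B ⊗ₖ Q') * (B ⊗ₖ P) + (B ⊗ₖ Q') * (Bᴴ ⊗ₖ Q')) := by noncomm_ring
  rw [expand]
  have hSS : S * S
      = (∑ i, (A i * A i) ⊗ₖ (1 : Matrix (Fin m ⊕ Fin m) (Fin m ⊕ Fin m) ℂ))
        + ∑ p ∈ Finset.univ.filter (fun p : Fin d × Fin d => p.1 < p.2),
            (A p.1 * A p.2 - A p.2 * A p.1) ⊗ₖ (Γ p.1 * Γ p.2) := by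
    rw [hS, Finset.sum_mul_sum]
    have : ∀ i k : Fin d, (A i ⊗ₖ Γ i) * (A k ⊗ₖ Γ k) = (A i * A k) ⊗ₖ (Γ i * Γ k) :=
      fun i k => (Matrix.mul_kronecker_mul _ _ _ _).symm
    simp_rw [this]
    rw [← Fintype.sum_prod_type (f := fun p : Fin d × Fin d => (A p.1 * A p.2) ⊗ₖ (Γ p.1 * Γ p.2))]
    rw [sum_prod_split (fun p : Fin d × Fin d => (A p.1 * A p.2) ⊗ₖ (Γ p.1 * Γ p.2))]
    congr 1
    · exact Finset.sum_congr rfl fun i _ => by rw [hΓsq]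
    · refine Finset.sum_congr rfl fun p hp => ?_
      have hlt : p.1 < p.2 := (Finset.mem_filter.mp hp).2
      have : Γ p.2 * Γ p.1 = -(Γ p.1 * Γ p.2) := hΓanti p.2 p.1 hlt.ne'
      simp only [Prod.fst_swap, Prod.snd_swap, Prod.swap]
      rw [this, kron_neg', sub_kron']
      abel
  have hcross : (S * (B ⊗ₖ P) + (Bᴴ ⊗ₖ P) * S) + (S * (Bᴴ ⊗ₖ Q') + (B ⊗ₖ Q') * S)
      = crossF0 A Γ B := by
    have h1 : S * (B ⊗ₖ P) = ∑ i, (A i * B) ⊗ₖ (Γ i * P) := by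
      rw [hS, Finset.sum_mul]
      exact Finset.sum_congr rfl fun i _ => (Matrix.mul_kronecker_mul _ _ _ _).symm
    have h2 : (Bᴴ ⊗ₖ P) * S = (∑ i, (A i * B) ⊗ₖ (Γ i * P))ᴴ := by
      rw [Matrix.conjTranspose_sum, hS, Finset.mul_sum]
      refine Finset.sum_congr rfl fun i _ => ?_
      rw [kron_conjTranspose', Matrix.conjTranspose_mul, Matrix.conjTranspose_mul,
        (hA i).eq, (hΓH i).eq, hPh, ← Matrix.mul_kronecker_mul]
    have h3 : S * (Bᴴ ⊗ₖ Q') = ∑ i, (A i * Bᴴ) ⊗ₖ (Γ i * Q') := by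
      rw [hS, Finset.sum_mul]
      exact Finset.sum_congr rfl fun i _ => (Matrix.mul_kronecker_mul _ _ _ _).symm
    have h4 : (B ⊗ₖ Q') * S = (∑ i, (A i * Bᴴ) ⊗ₖ (Γ i * Q'))ᴴ := by
      rw [Matrix.conjTranspose_sum, hS, Finset.mul_sum]
      refine Finset.sum_congr rfl fun i _ => ?_
      rw [kron_conjTranspose', Matrix.conjTranspose_mul, Matrix.conjTranspose_mul,
        (hA i).eq, (hΓH i).eq, hQ'h, Matrix.conjTranspose_conjTranspose,
        ← Matrix.mul_kronecker_mul]
    rw [h1, h2, h3, h4, crossF0]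
    abel
  have hBB : (Bᴴ ⊗ₖ P) * (B ⊗ₖ P) + (Bᴴ ⊗ₖ P) * (Bᴴ ⊗ₖ Q') = (Bᴴ * B) ⊗ₖ P := by
    rw [← Matrix.mul_kronecker_mul, ← Matrix.mul_kronecker_mul, hPP, hPQ, Matrix.kronecker_zero,
      add_zero]
  have hBB2 : (B ⊗ₖ Q') * (B ⊗ₖ P) + (B ⊗ₖ Q') * (Bᴴ ⊗ₖ Q')
      = (B * Bᴴ) ⊗ₖ (Matrix.fromBlocks 0 0 0 1 : Matrix (Fin m ⊕ Fin m) (Fin m ⊕ Fin m) ℂ) := by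
    rw [← Matrix.mul_kronecker_mul, ← Matrix.mul_kronecker_mul, hQP, hQQ, Matrix.kronecker_zero,
      zero_add]
  rw [hSS, hBB, hBB2, ← hcross]
  abel

end identity

section aux
variable {N S : Type*} [Fintype N] [DecidableEq N] [Fintype S] [DecidableEq S]

noncomputable def colv (v : EuclideanSpace ℂ (N × S)) (s : S) : EuclideanSpace ℂ N :=
  WithLp.toLp 2 (fun x => v (x, s))

lemma toEL_mul (M M' : Matrix N N ℂ) (v : EuclideanSpace ℂ N) :
    Matrix.toEuclideanLin (M * M') v = Matrix.toEuclideanLin M (Matrix.toEuclideanLin M' v) := by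
  simp [Matrix.toEuclideanLin_apply, Matrix.mulVec_mulVec]

lemma norm_toEL_le (A : Matrix N N ℂ) (ψ : EuclideanSpace ℂ N) :
    ‖Matrix.toEuclideanLin A ψ‖ ≤ opNorm A * ‖ψ‖ := by
  have := (LinearMap.toContinuousLinearMap (Matrix.toEuclideanLin A)).le_opNorm ψ
  rwa [LinearMap.coe_toContinuousLinearMap'] at this

lemma opNorm_nonneg' (A : Matrix N N ℂ) : 0 ≤ opNorm A := norm_nonneg _

lemma norm_sq_euclid {I : Type*} [Fintype I] (v : EuclideanSpace ℂ I) :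
    ‖v‖ ^ 2 = ∑ i, ‖v i‖ ^ 2 := by
  rw [EuclideanSpace.norm_eq, Real.sq_sqrt]
  positivity

omit [DecidableEq N] [DecidableEq S] in
lemma sum_colv_norm_sq (v : EuclideanSpace ℂ (N × S)) :
    ∑ s, ‖colv v s‖ ^ 2 = ‖v‖ ^ 2 := by
  simp only [norm_sq_euclid, colv]
  rw [Fintype.sum_prod_type, Finset.sum_comm]

lemma inner_conjmul (M : Matrix N N ℂ) (v : EuclideanSpace ℂ N) :
    (inner ℂ v (Matrix.toEuclideanLin (Mᴴ * M) v) : ℂ).re = ‖Matrix.toEuclideanLin M v‖ ^ 2 := by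
  rw [toEL_mul, Matrix.toEuclideanLin_conjTranspose_eq_adjoint, LinearMap.adjoint_inner_right]
  simpa using inner_self_eq_norm_sq (𝕜 := ℂ) (Matrix.toEuclideanLin M v)

lemma kron_diag_apply (X : Matrix N N ℂ) (dg : S → ℂ) (v : EuclideanSpace ℂ (N × S)) (x : N) (s : S) :
    Matrix.toEuclideanLin (X ⊗ₖ Matrix.diagonal dg) v (x, s)
      = dg s * Matrix.toEuclideanLin X (colv v s) x := by
  show (∑ q : N × S, (X ⊗ₖ Matrix.diagonal dg) (x, s) q * v q)
      = dg s * ∑ y : N, X x y * (colv v s) y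
  rw [Fintype.sum_prod_type, Finset.mul_sum]
  refine Finset.sum_congr rfl fun y _ => ?_
  rw [Finset.sum_eq_single s]
  · simp [colv]; ring
  · intro t _ h; simp [Matrix.diagonal, Ne.symm h]
  · simp

lemma norm_kron_diag_sq (X : Matrix N N ℂ) (dg : S → ℂ) (v : EuclideanSpace ℂ (N × S)) :
    ‖Matrix.toEuclideanLin (X ⊗ₖ Matrix.diagonal dg) v‖ ^ 2
      = ∑ s, ‖dg s‖ ^ 2 * ‖Matrix.toEuclideanLin X (colv v s)‖ ^ 2 := by
  rw [norm_sq_euclid]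
  have : ∀ s : S, ‖dg s‖ ^ 2 * ‖Matrix.toEuclideanLin X (colv v s)‖ ^ 2
      = ∑ x : N, ‖dg s‖ ^ 2 * ‖Matrix.toEuclideanLin X (colv v s) x‖ ^ 2 := by
    intro s
    rw [← Finset.mul_sum, ← norm_sq_euclid]
  simp_rw [this]
  rw [Fintype.sum_prod_type, Finset.sum_comm]
  refine Finset.sum_congr rfl fun s _ => Finset.sum_congr rfl fun x _ => ?_
  rw [kron_diag_apply, norm_mul, mul_pow]

lemma norm_kron_one_sq (X : Matrix N N ℂ) (v : EuclideanSpace ℂ (N × S)) :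
    ‖Matrix.toEuclideanLin (X ⊗ₖ (1 : Matrix S S ℂ)) v‖ ^ 2
      = ∑ s, ‖Matrix.toEuclideanLin X (colv v s)‖ ^ 2 := by
  have h1 : (1 : Matrix S S ℂ) = Matrix.diagonal (fun _ => 1) := Matrix.diagonal_one.symm
  rw [h1, norm_kron_diag_sq]
  simp

lemma norm_kron_one_le (X : Matrix N N ℂ) (v : EuclideanSpace ℂ (N × S)) :
    ‖Matrix.toEuclideanLin (X ⊗ₖ (1 : Matrix S S ℂ)) v‖ ≤ opNorm X * ‖v‖ := by
  have hsq : ‖Matrix.toEuclideanLin (X ⊗ₖ (1 : Matrix S S ℂ)) v‖ ^ 2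
      ≤ (opNorm X * ‖v‖) ^ 2 := by
    rw [norm_kron_one_sq, mul_pow, ← sum_colv_norm_sq (v := v), Finset.mul_sum]
    refine Finset.sum_le_sum fun s _ => ?_
    have := norm_toEL_le X (colv v s)
    calc ‖Matrix.toEuclideanLin X (colv v s)‖ ^ 2 ≤ (opNorm X * ‖colv v s‖) ^ 2 := by
          apply pow_le_pow_left₀ (norm_nonneg _) this
      _ = opNorm X ^ 2 * ‖colv v s‖ ^ 2 := by ring
  have h0 : (0 : ℝ) ≤ opNorm X * ‖v‖ := mul_nonneg (opNorm_nonneg' X) (norm_nonneg _)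
  exact le_of_pow_le_pow_left₀ two_ne_zero h0 hsq

lemma norm_toEL_unitary (W : Matrix S S ℂ) (hW : Wᴴ * W = 1) (v : EuclideanSpace ℂ S) :
    ‖Matrix.toEuclideanLin W v‖ = ‖v‖ := by
  have h := inner_conjmul W v
  rw [hW] at h
  have h1 : Matrix.toEuclideanLin (1 : Matrix S S ℂ) v = v := by
    simp [Matrix.toEuclideanLin_apply]
  rw [h1] at h
  have h2 : ‖v‖ ^ 2 = ‖Matrix.toEuclideanLin W v‖ ^ 2 := by
    rw [← h]
    simpa using (inner_self_eq_norm_sq (𝕜 := ℂ) v).symm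
  nlinarith [norm_nonneg (Matrix.toEuclideanLin W v), norm_nonneg v, h2]

lemma rQ_abs_le (M : Matrix N N ℂ) (v : EuclideanSpace ℂ N) :
    |(inner ℂ v (Matrix.toEuclideanLin M v) : ℂ).re| ≤ ‖v‖ * ‖Matrix.toEuclideanLin M v‖ := by
  refine le_trans (Complex.abs_re_le_norm _) ?_
  exact norm_inner_le_norm _ _

lemma rQ_herm_sq (X : Matrix N N ℂ) (hX : Xᴴ = X) (v : EuclideanSpace ℂ (N × S)) :
    (inner ℂ v (Matrix.toEuclideanLin ((X * X) ⊗ₖ (1 : Matrix S S ℂ)) v) : ℂ).re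
      = ∑ s, ‖Matrix.toEuclideanLin X (colv v s)‖ ^ 2 := by
  have hfac : (X * X) ⊗ₖ (1 : Matrix S S ℂ)
      = (X ⊗ₖ (1 : Matrix S S ℂ))ᴴ * (X ⊗ₖ (1 : Matrix S S ℂ)) := by
    rw [kron_conjTranspose', Matrix.conjTranspose_one, hX, ← Matrix.mul_kronecker_mul, one_mul]
  rw [hfac, inner_conjmul, norm_kron_one_sq]

lemma rQ_kron_unitary_le (X : Matrix N N ℂ) (U : Matrix S S ℂ) (hU : Uᴴ * U = 1)
    (v : EuclideanSpace ℂ (N × S)) (hv : ‖v‖ = 1) :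
    |(inner ℂ v (Matrix.toEuclideanLin (X ⊗ₖ U) v) : ℂ).re| ≤ opNorm X := by
  have hXU : X ⊗ₖ U = (X ⊗ₖ (1 : Matrix S S ℂ)) * ((1 : Matrix N N ℂ) ⊗ₖ U) := by
    rw [← Matrix.mul_kronecker_mul, mul_one, one_mul]
  have hIU : ((1 : Matrix N N ℂ) ⊗ₖ U)ᴴ * ((1 : Matrix N N ℂ) ⊗ₖ U) = 1 := by
    rw [kron_conjTranspose', Matrix.conjTranspose_one, ← Matrix.mul_kronecker_mul, one_mul, hU,
      Matrix.one_kronecker_one]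
  have hw : ‖Matrix.toEuclideanLin ((1 : Matrix N N ℂ) ⊗ₖ U) v‖ = 1 := by
    rw [norm_toEL_unitary _ hIU, hv]
  calc |(inner ℂ v (Matrix.toEuclideanLin (X ⊗ₖ U) v) : ℂ).re|
      ≤ ‖v‖ * ‖Matrix.toEuclideanLin (X ⊗ₖ U) v‖ := rQ_abs_le _ _
    _ = ‖Matrix.toEuclideanLin (X ⊗ₖ (1 : Matrix S S ℂ))
          (Matrix.toEuclideanLin ((1 : Matrix N N ℂ) ⊗ₖ U) v)‖ := by
        rw [hv, one_mul, hXU, toEL_mul]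
    _ ≤ opNorm X * ‖Matrix.toEuclideanLin ((1 : Matrix N N ℂ) ⊗ₖ U) v‖ := norm_kron_one_le _ _
    _ = opNorm X := by rw [hw, mul_one]

end aux

section Bterms
variable {n m : ℕ}

lemma P_diag : (Matrix.fromBlocks 1 0 0 0 : Matrix (Fin m ⊕ Fin m) (Fin m ⊕ Fin m) ℂ)
    = Matrix.diagonal (Sum.elim (fun _ => 1) (fun _ => 0)) := by
  rw [← Matrix.fromBlocks_diagonal, Matrix.diagonal_one, Matrix.diagonal_zero]

lemma Q_diag : (Matrix.fromBlocks 0 0 0 1 : Matrix (Fin m ⊕ Fin m) (Fin m ⊕ Fin m) ℂ)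
    = Matrix.diagonal (Sum.elim (fun _ => 0) (fun _ => 1)) := by
  rw [← Matrix.fromBlocks_diagonal, Matrix.diagonal_one, Matrix.diagonal_zero]

lemma rQ_BP (X : Matrix (Fin n) (Fin n) ℂ) (v : EuclideanSpace ℂ (Fin n × (Fin m ⊕ Fin m))) :
    (inner ℂ v (Matrix.toEuclideanLin
        ((Xᴴ * X) ⊗ₖ (Matrix.fromBlocks 1 0 0 0 : Matrix (Fin m ⊕ Fin m) (Fin m ⊕ Fin m) ℂ)) v)
      : ℂ).re = ∑ a, ‖Matrix.toEuclideanLin X (colv v (Sum.inl a))‖ ^ 2 := by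
  have hPh : (Matrix.fromBlocks 1 0 0 0 : Matrix (Fin m ⊕ Fin m) (Fin m ⊕ Fin m) ℂ)ᴴ
      = Matrix.fromBlocks 1 0 0 0 := by simp [Matrix.fromBlocks_conjTranspose]
  have hPP : (Matrix.fromBlocks 1 0 0 0 : Matrix (Fin m ⊕ Fin m) (Fin m ⊕ Fin m) ℂ)
      * Matrix.fromBlocks 1 0 0 0 = Matrix.fromBlocks 1 0 0 0 := by
    simp [Matrix.fromBlocks_multiply]
  have hfac : (Xᴴ * X) ⊗ₖ (Matrix.fromBlocks 1 0 0 0 : Matrix (Fin m ⊕ Fin m) (Fin m ⊕ Fin m) ℂ)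
      = (X ⊗ₖ (Matrix.fromBlocks 1 0 0 0 : Matrix (Fin m ⊕ Fin m) (Fin m ⊕ Fin m) ℂ))ᴴ
        * (X ⊗ₖ Matrix.fromBlocks 1 0 0 0) := by
    rw [kron_conjTranspose', hPh, ← Matrix.mul_kronecker_mul, hPP]
  rw [hfac, inner_conjmul, P_diag, norm_kron_diag_sq, Fintype.sum_sum_type]
  simp

lemma rQ_BQ (X : Matrix (Fin n) (Fin n) ℂ) (v : EuclideanSpace ℂ (Fin n × (Fin m ⊕ Fin m))) :
    (inner ℂ v (Matrix.toEuclideanLin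
        ((Xᴴ * X) ⊗ₖ (Matrix.fromBlocks 0 0 0 1 : Matrix (Fin m ⊕ Fin m) (Fin m ⊕ Fin m) ℂ)) v)
      : ℂ).re = ∑ a, ‖Matrix.toEuclideanLin X (colv v (Sum.inr a))‖ ^ 2 := by
  have hQh : (Matrix.fromBlocks 0 0 0 1 : Matrix (Fin m ⊕ Fin m) (Fin m ⊕ Fin m) ℂ)ᴴ
      = Matrix.fromBlocks 0 0 0 1 := by simp [Matrix.fromBlocks_conjTranspose]
  have hQQ : (Matrix.fromBlocks 0 0 0 1 : Matrix (Fin m ⊕ Fin m) (Fin m ⊕ Fin m) ℂ)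
      * Matrix.fromBlocks 0 0 0 1 = Matrix.fromBlocks 0 0 0 1 := by
    simp [Matrix.fromBlocks_multiply]
  have hfac : (Xᴴ * X) ⊗ₖ (Matrix.fromBlocks 0 0 0 1 : Matrix (Fin m ⊕ Fin m) (Fin m ⊕ Fin m) ℂ)
      = (X ⊗ₖ (Matrix.fromBlocks 0 0 0 1 : Matrix (Fin m ⊕ Fin m) (Fin m ⊕ Fin m) ℂ))ᴴ
        * (X ⊗ₖ Matrix.fromBlocks 0 0 0 1) := by
    rw [kron_conjTranspose', hQh, ← Matrix.mul_kronecker_mul, hQQ]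
  rw [hfac, inner_conjmul, Q_diag, norm_kron_diag_sq, Fintype.sum_sum_type]
  simp

end Bterms

set_option maxHeartbeats 1000000 in
theorem stmt6 {n d : ℕ} (m : ℕ) (hm : m = 2 ^ (d / 2))
    (A : Fin d → Matrix (Fin n) (Fin n) ℂ) (hA : ∀ i, (A i).IsHermitian)
    (B : Matrix (Fin n) (Fin n) ℂ) (hB : ¬ B.IsHermitian)
    (Γ : Fin d → Matrix (Fin m ⊕ Fin m) (Fin m ⊕ Fin m) ℂ)
    (hΓH : ∀ i, (Γ i).IsHermitian)
    (hΓsq : ∀ i, Γ i * Γ i = 1)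
    (hΓanti : ∀ i j, i ≠ j → Γ i * Γ j = -(Γ j * Γ i))
    (ε₁ ε₂ : ℝ)
    (h₁ : sigMin (localizer0 A Γ B) = ε₁)
    (h₂ : (∑ p ∈ Finset.univ.filter (fun p : Fin d × Fin d => p.1 < p.2),
            opNorm (A p.1 * A p.2 - A p.2 * A p.1)) + opNorm (crossF0 A Γ B) ≤ ε₂) :
    ∃ ψ : EuclideanSpace ℂ (Fin n), ‖ψ‖ = 1 ∧
      (Real.sqrt ((∑ i, ‖Matrix.toEuclideanLin (A i) ψ‖ ^ 2)
            + ‖Matrix.toEuclideanLin B ψ‖ ^ 2)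
          ≤ Real.sqrt (2 * m) * Real.sqrt (ε₁ ^ 2 + ε₂)
        ∨ Real.sqrt ((∑ i, ‖Matrix.toEuclideanLin (A i) ψ‖ ^ 2)
            + ‖Matrix.toEuclideanLin Bᴴ ψ‖ ^ 2)
          ≤ Real.sqrt (2 * m) * Real.sqrt (ε₁ ^ 2 + ε₂)) := by
  classical
  have hnpos : 0 < n := by
    rcases Nat.eq_zero_or_pos n with h | h
    · exfalso; apply hB; subst h
      exact Subsingleton.elim _ _
    · exact h
  have hmpos : 0 < m := by rw [hm]; positivity
  set L := localizer0 A Γ B with hLdef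
  have hε₂ : 0 ≤ ε₂ :=
    le_trans (add_nonneg (Finset.sum_nonneg fun p _ => opNorm_nonneg' _) (opNorm_nonneg' _)) h₂
  -- obtain a minimizing unit vector
  have hcont : Continuous fun ψ : EuclideanSpace ℂ (Fin n × (Fin m ⊕ Fin m)) =>
      ‖Matrix.toEuclideanLin L ψ‖ := by
    have h := (LinearMap.toContinuousLinearMap (Matrix.toEuclideanLin L)).continuous
    rw [LinearMap.coe_toContinuousLinearMap'] at h
    exact h.norm
  have hKset : {r : ℝ | ∃ ψ : EuclideanSpace ℂ (Fin n × (Fin m ⊕ Fin m)), ‖ψ‖ = 1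
        ∧ r = ‖Matrix.toEuclideanLin L ψ‖}
      = (fun ψ : EuclideanSpace ℂ (Fin n × (Fin m ⊕ Fin m)) => ‖Matrix.toEuclideanLin L ψ‖) ''
        Metric.sphere 0 1 := by
    ext r
    constructor
    · rintro ⟨ψ, hψ, hr⟩
      exact ⟨ψ, by simpa using hψ, hr.symm⟩
    · rintro ⟨ψ, hψ, hr⟩
      exact ⟨ψ, by simpa using hψ, hr.symm⟩
  have hCompact : IsCompact ((fun ψ : EuclideanSpace ℂ (Fin n × (Fin m ⊕ Fin m)) =>
      ‖Matrix.toEuclideanLin L ψ‖) '' Metric.sphere 0 1) :=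
    (isCompact_sphere 0 1).image hcont
  have hNe : ((fun ψ : EuclideanSpace ℂ (Fin n × (Fin m ⊕ Fin m)) =>
      ‖Matrix.toEuclideanLin L ψ‖) '' Metric.sphere 0 1).Nonempty := by
    refine ⟨_, ⟨EuclideanSpace.single (⟨0, hnpos⟩, Sum.inl ⟨0, hmpos⟩) (1 : ℂ), ?_, rfl⟩⟩
    simp [mem_sphere_zero_iff_norm]
  have hmem := hCompact.sInf_mem hNe
  rw [← hKset] at hmem
  obtain ⟨v, hv1, hvL⟩ := hmem
  have hε₁v : ε₁ = ‖Matrix.toEuclideanLin L v‖ := by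
    have hsig : sInf {r : ℝ | ∃ ψ : EuclideanSpace ℂ (Fin n × (Fin m ⊕ Fin m)), ‖ψ‖ = 1
        ∧ r = ‖Matrix.toEuclideanLin L ψ‖} = ε₁ := h₁
    rw [← hsig]; exact hvL
  -- quadratic form expansion
  have hε₁sq : ε₁ ^ 2 = (inner ℂ v (Matrix.toEuclideanLin (Lᴴ * L) v) : ℂ).re := by
    rw [inner_conjmul, hε₁v]
  rw [hLdef, LhL_expand A Γ B hA hΓH hΓsq hΓanti] at hε₁sq
  have hadd : ∀ M M' : Matrix (Fin n × (Fin m ⊕ Fin m)) (Fin n × (Fin m ⊕ Fin m)) ℂ,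
      (inner ℂ v (Matrix.toEuclideanLin (M + M') v) : ℂ).re
        = (inner ℂ v (Matrix.toEuclideanLin M v) : ℂ).re
          + (inner ℂ v (Matrix.toEuclideanLin M' v) : ℂ).re := by
    intro M M'
    rw [map_add, LinearMap.add_apply, inner_add_right, Complex.add_re]
  have hsumre : ∀ {α : Type} (t : Finset α)
      (f : α → Matrix (Fin n × (Fin m ⊕ Fin m)) (Fin n × (Fin m ⊕ Fin m)) ℂ),
      (inner ℂ v (Matrix.toEuclideanLin (∑ i ∈ t, f i) v) : ℂ).re
        = ∑ i ∈ t, (inner ℂ v (Matrix.toEuclideanLin (f i) v) : ℂ).re := by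
    intro α t f
    rw [map_sum, LinearMap.sum_apply, inner_sum, Complex.re_sum]
  rw [hadd, hadd, hadd, hadd] at hε₁sq
  -- the five pieces
  have hR1 : (inner ℂ v (Matrix.toEuclideanLin
      (∑ i, (A i * A i) ⊗ₖ (1 : Matrix (Fin m ⊕ Fin m) (Fin m ⊕ Fin m) ℂ)) v) : ℂ).re
      = ∑ i, ∑ s, ‖Matrix.toEuclideanLin (A i) (colv v s)‖ ^ 2 := by
    rw [hsumre]
    exact Finset.sum_congr rfl fun i _ => rQ_herm_sq (A i) (hA i).eq v
  have hR4 : (inner ℂ v (Matrix.toEuclideanLin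
      ((Bᴴ * B) ⊗ₖ (Matrix.fromBlocks 1 0 0 0 : Matrix (Fin m ⊕ Fin m) (Fin m ⊕ Fin m) ℂ)) v)
      : ℂ).re = ∑ a, ‖Matrix.toEuclideanLin B (colv v (Sum.inl a))‖ ^ 2 := rQ_BP B v
  have hR5 : (inner ℂ v (Matrix.toEuclideanLin
      ((B * Bᴴ) ⊗ₖ (Matrix.fromBlocks 0 0 0 1 : Matrix (Fin m ⊕ Fin m) (Fin m ⊕ Fin m) ℂ)) v)
      : ℂ).re = ∑ a, ‖Matrix.toEuclideanLin Bᴴ (colv v (Sum.inr a))‖ ^ 2 := by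
    have : B * Bᴴ = Bᴴᴴ * Bᴴ := by rw [Matrix.conjTranspose_conjTranspose]
    rw [this]
    exact rQ_BQ Bᴴ v
  have hR2 : |(inner ℂ v (Matrix.toEuclideanLin
      (∑ p ∈ Finset.univ.filter (fun p : Fin d × Fin d => p.1 < p.2),
        (A p.1 * A p.2 - A p.2 * A p.1) ⊗ₖ (Γ p.1 * Γ p.2)) v) : ℂ).re|
      ≤ ∑ p ∈ Finset.univ.filter (fun p : Fin d × Fin d => p.1 < p.2),
          opNorm (A p.1 * A p.2 - A p.2 * A p.1) := by
    rw [hsumre]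
    refine le_trans (Finset.abs_sum_le_sum_abs _ _) (Finset.sum_le_sum fun p _ => ?_)
    have hU : (Γ p.1 * Γ p.2)ᴴ * (Γ p.1 * Γ p.2) = 1 := by
      rw [Matrix.conjTranspose_mul, (hΓH p.1).eq, (hΓH p.2).eq]
      calc Γ p.2 * Γ p.1 * (Γ p.1 * Γ p.2) = Γ p.2 * (Γ p.1 * Γ p.1) * Γ p.2 := by
            noncomm_ring
        _ = 1 := by rw [hΓsq p.1, mul_one, hΓsq p.2]
    exact rQ_kron_unitary_le _ _ hU v hv1
  have hRF : |(inner ℂ v (Matrix.toEuclideanLin (crossF0 A Γ B) v) : ℂ).re|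
      ≤ opNorm (crossF0 A Γ B) := by
    refine le_trans (rQ_abs_le _ _) ?_
    rw [hv1, one_mul]
    have := norm_toEL_le (crossF0 A Γ B) v
    rwa [hv1, mul_one] at this
  -- main energy bound
  set D : ℝ := (∑ i, ∑ s, ‖Matrix.toEuclideanLin (A i) (colv v s)‖ ^ 2)
      + (∑ a, ‖Matrix.toEuclideanLin B (colv v (Sum.inl a))‖ ^ 2)
      + (∑ a, ‖Matrix.toEuclideanLin Bᴴ (colv v (Sum.inr a))‖ ^ 2) with hDdef
  have hD : D ≤ ε₁ ^ 2 + ε₂ := by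
    rw [hR1, hR4, hR5] at hε₁sq
    have habs2 := abs_le.mp hR2
    have habsF := abs_le.mp hRF
    rw [hDdef]
    linarith [habs2.1, habsF.1, h₂, hε₁sq]
  -- pigeonhole
  have hsum1 : ∑ s, ‖colv v s‖ ^ 2 = 1 := by
    rw [sum_colv_norm_sq, hv1, one_pow]
  have hcard : (Finset.univ : Finset (Fin m ⊕ Fin m)).card = 2 * m := by
    simp [Fintype.card_sum]
    omega
  have hex : ∃ s0 : Fin m ⊕ Fin m, 1 / (2 * (m : ℝ)) ≤ ‖colv v s0‖ ^ 2 := by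
    by_contra hcon
    push_neg at hcon
    have hne : (Finset.univ : Finset (Fin m ⊕ Fin m)).Nonempty :=
      ⟨Sum.inl ⟨0, hmpos⟩, Finset.mem_univ _⟩
    have h := Finset.sum_lt_sum_of_nonempty hne (fun s _ => hcon s)
    rw [Finset.sum_const, hcard, nsmul_eq_mul] at h
    have hm' : (0 : ℝ) < 2 * m := by positivity
    push_cast at h
    have hid : (2 * (m : ℝ)) * (1 / (2 * (m : ℝ))) = 1 := by field_simp
    linarith [hsum1, h, hid]
  -- master construction
  have hδ : (0 : ℝ) ≤ ε₁ ^ 2 + ε₂ := add_nonneg (sq_nonneg _) hε₂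
  have master : ∀ (s1 : Fin m ⊕ Fin m) (Z : Matrix (Fin n) (Fin n) ℂ),
      1 / (2 * (m : ℝ)) ≤ ‖colv v s1‖ ^ 2 →
      (∑ i, ‖Matrix.toEuclideanLin (A i) (colv v s1)‖ ^ 2)
        + ‖Matrix.toEuclideanLin Z (colv v s1)‖ ^ 2 ≤ D →
      ∃ ψ : EuclideanSpace ℂ (Fin n), ‖ψ‖ = 1 ∧
        Real.sqrt ((∑ i, ‖Matrix.toEuclideanLin (A i) ψ‖ ^ 2)
            + ‖Matrix.toEuclideanLin Z ψ‖ ^ 2)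
          ≤ Real.sqrt (2 * m) * Real.sqrt (ε₁ ^ 2 + ε₂) := by
    intro s1 Z hs1 hZ
    have hc2pos : 0 < ‖colv v s1‖ ^ 2 := lt_of_lt_of_le (by positivity) hs1
    have hcpos : 0 < ‖colv v s1‖ := by
      by_contra h
      push_neg at h
      have hc0 : ‖colv v s1‖ = 0 := le_antisymm h (norm_nonneg _)
      rw [hc0] at hc2pos
      simp at hc2pos
    have hcinv2 : (‖colv v s1‖⁻¹) ^ 2 ≤ 2 * m := by
      have h1 : (2 * (m : ℝ))⁻¹ ≤ ‖colv v s1‖ ^ 2 := by rwa [← one_div]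
      calc (‖colv v s1‖⁻¹) ^ 2 = (‖colv v s1‖ ^ 2)⁻¹ := by rw [inv_pow]
        _ ≤ ((2 * (m : ℝ))⁻¹)⁻¹ := inv_anti₀ (by positivity) h1
        _ = 2 * m := inv_inv _
    refine ⟨((‖colv v s1‖⁻¹ : ℝ) : ℂ) • colv v s1, ?_, ?_⟩
    · rw [norm_smul]
      simp only [Complex.norm_real, Real.norm_eq_abs]
      rw [abs_of_nonneg (inv_nonneg.mpr hcpos.le)]
      field_simp
    · have hψM : ∀ M : Matrix (Fin n) (Fin n) ℂ,
          ‖Matrix.toEuclideanLin M (((‖colv v s1‖⁻¹ : ℝ) : ℂ) • colv v s1)‖ ^ 2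
            = (‖colv v s1‖⁻¹) ^ 2 * ‖Matrix.toEuclideanLin M (colv v s1)‖ ^ 2 := by
        intro M
        rw [_root_.map_smul, norm_smul]
        simp only [Complex.norm_real, Real.norm_eq_abs]
        rw [abs_of_nonneg (inv_nonneg.mpr hcpos.le)]
        ring
      have heq : (∑ i, ‖Matrix.toEuclideanLin (A i)
            (((‖colv v s1‖⁻¹ : ℝ) : ℂ) • colv v s1)‖ ^ 2)
          + ‖Matrix.toEuclideanLin Z (((‖colv v s1‖⁻¹ : ℝ) : ℂ) • colv v s1)‖ ^ 2
          = (‖colv v s1‖⁻¹) ^ 2 * ((∑ i, ‖Matrix.toEuclideanLin (A i) (colv v s1)‖ ^ 2)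
            + ‖Matrix.toEuclideanLin Z (colv v s1)‖ ^ 2) := by
        simp_rw [hψM]
        rw [← Finset.mul_sum]
        ring
      have hEnn : (0 : ℝ) ≤ (∑ i, ‖Matrix.toEuclideanLin (A i) (colv v s1)‖ ^ 2)
          + ‖Matrix.toEuclideanLin Z (colv v s1)‖ ^ 2 :=
        add_nonneg (Finset.sum_nonneg fun i _ => sq_nonneg _) (sq_nonneg _)
      have hle : (∑ i, ‖Matrix.toEuclideanLin (A i)
            (((‖colv v s1‖⁻¹ : ℝ) : ℂ) • colv v s1)‖ ^ 2)
          + ‖Matrix.toEuclideanLin Z (((‖colv v s1‖⁻¹ : ℝ) : ℂ) • colv v s1)‖ ^ 2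
          ≤ (2 * m) * (ε₁ ^ 2 + ε₂) := by
        rw [heq]
        exact mul_le_mul hcinv2 (le_trans hZ hD) hEnn (by positivity)
      calc Real.sqrt _ ≤ Real.sqrt ((2 * m) * (ε₁ ^ 2 + ε₂)) := Real.sqrt_le_sqrt hle
        _ = Real.sqrt (2 * m) * Real.sqrt (ε₁ ^ 2 + ε₂) := Real.sqrt_mul (by positivity) _
  obtain ⟨s0, hs0⟩ := hex
  rcases s0 with a | a
  · -- left branch with B
    have hsel : (∑ i, ‖Matrix.toEuclideanLin (A i) (colv v (Sum.inl a))‖ ^ 2)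
        + ‖Matrix.toEuclideanLin B (colv v (Sum.inl a))‖ ^ 2 ≤ D := by
      rw [hDdef]
      have h1 : ∑ i, ‖Matrix.toEuclideanLin (A i) (colv v (Sum.inl a))‖ ^ 2
          ≤ ∑ i, ∑ s, ‖Matrix.toEuclideanLin (A i) (colv v s)‖ ^ 2 :=
        Finset.sum_le_sum fun i _ =>
          Finset.single_le_sum (f := fun s => ‖Matrix.toEuclideanLin (A i) (colv v s)‖ ^ 2)
            (fun s _ => sq_nonneg _) (Finset.mem_univ (Sum.inl a))
      have h2 : ‖Matrix.toEuclideanLin B (colv v (Sum.inl a))‖ ^ 2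
          ≤ ∑ a', ‖Matrix.toEuclideanLin B (colv v (Sum.inl a'))‖ ^ 2 :=
        Finset.single_le_sum (f := fun a' => ‖Matrix.toEuclideanLin B (colv v (Sum.inl a'))‖ ^ 2)
          (fun a' _ => sq_nonneg _) (Finset.mem_univ a)
      have h3 : (0 : ℝ) ≤ ∑ a', ‖Matrix.toEuclideanLin Bᴴ (colv v (Sum.inr a'))‖ ^ 2 :=
        Finset.sum_nonneg fun a' _ => sq_nonneg _
      linarith
    obtain ⟨ψ, hψ1, hψb⟩ := master (Sum.inl a) B hs0 hsel
    exact ⟨ψ, hψ1, Or.inl hψb⟩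
  · -- right branch with Bᴴ
    have hsel : (∑ i, ‖Matrix.toEuclideanLin (A i) (colv v (Sum.inr a))‖ ^ 2)
        + ‖Matrix.toEuclideanLin Bᴴ (colv v (Sum.inr a))‖ ^ 2 ≤ D := by
      rw [hDdef]
      have h1 : ∑ i, ‖Matrix.toEuclideanLin (A i) (colv v (Sum.inr a))‖ ^ 2
          ≤ ∑ i, ∑ s, ‖Matrix.toEuclideanLin (A i) (colv v s)‖ ^ 2 :=
        Finset.sum_le_sum fun i _ =>
          Finset.single_le_sum (f := fun s => ‖Matrix.toEuclideanLin (A i) (colv v s)‖ ^ 2)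
            (fun s _ => sq_nonneg _) (Finset.mem_univ (Sum.inr a))
      have h2 : ‖Matrix.toEuclideanLin Bᴴ (colv v (Sum.inr a))‖ ^ 2
          ≤ ∑ a', ‖Matrix.toEuclideanLin Bᴴ (colv v (Sum.inr a'))‖ ^ 2 :=
        Finset.single_le_sum (f := fun a' => ‖Matrix.toEuclideanLin Bᴴ (colv v (Sum.inr a'))‖ ^ 2)
          (fun a' _ => sq_nonneg _) (Finset.mem_univ a)
      have h3 : (0 : ℝ) ≤ ∑ a', ‖Matrix.toEuclideanLin B (colv v (Sum.inl a'))‖ ^ 2 :=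
        Finset.sum_nonneg fun a' _ => sq_nonneg _
      linarith
    obtain ⟨ψ, hψ1, hψb⟩ := master (Sum.inr a) Bᴴ hs0 hsel
    exact ⟨ψ, hψ1, Or.inr hψb⟩
end

section
/- Let A_1,…,A_d be Hermitian and B non-Hermitian in M_n(ℂ). If there is a unit vector ψ with Σ_i ‖A_iψ − λ_iψ‖² + ‖Bψ − νψ‖² ≤ ε₁ and Σ_{i≠k}‖[A_i,A_k]‖ + ‖F‖ ≤ ε₂, then σ_min(L_{(λ,ν)}(A,B)) ≤ √(ε₁ + ε₂), i.e., the probe site (λ,ν) lies in the Clifford radial √(ε₁+ε₂)-pseudospectrum. -/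
set_option linter.unusedSectionVars false
set_option maxHeartbeats 1000000

open Matrix Kronecker
open scoped InnerProductSpace ComplexConjugate

/-- The non-Hermitian spectral localizer. -/
noncomputable def localizer {n d m : ℕ}
    (A : Fin d → Matrix (Fin n) (Fin n) ℂ)
    (Γ : Fin d → Matrix (Fin m ⊕ Fin m) (Fin m ⊕ Fin m) ℂ)
    (B : Matrix (Fin n) (Fin n) ℂ) (lam : Fin d → ℝ) (ν : ℂ) :
    Matrix (Fin n × (Fin m ⊕ Fin m)) (Fin n × (Fin m ⊕ Fin m)) ℂ :=
  (∑ i, (A i - (lam i : ℂ) • 1) ⊗ₖ Γ i)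
    + (B - ν • 1) ⊗ₖ (Matrix.fromBlocks 1 0 0 0)
    + (B - ν • 1)ᴴ ⊗ₖ (Matrix.fromBlocks 0 0 0 (-1))

/-- The cross-term matrix `F` in the expansion of `L†L` at probe site `(λ,ν)`. -/
noncomputable def crossF {n d m : ℕ}
    (A : Fin d → Matrix (Fin n) (Fin n) ℂ)
    (Γ : Fin d → Matrix (Fin m ⊕ Fin m) (Fin m ⊕ Fin m) ℂ)
    (B : Matrix (Fin n) (Fin n) ℂ) (lam : Fin d → ℝ) (ν : ℂ) :
    Matrix (Fin n × (Fin m ⊕ Fin m)) (Fin n × (Fin m ⊕ Fin m)) ℂ :=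
  (∑ i, ((A i - (lam i : ℂ) • 1) * (B - ν • 1)) ⊗ₖ (Γ i * Matrix.fromBlocks 1 0 0 0))
    + (∑ i, ((A i - (lam i : ℂ) • 1) * (B - ν • 1)) ⊗ₖ (Γ i * Matrix.fromBlocks 1 0 0 0))ᴴ
    + (∑ i, ((A i - (lam i : ℂ) • 1) * (B - ν • 1)ᴴ) ⊗ₖ (Γ i * Matrix.fromBlocks 0 0 0 (-1)))
    + (∑ i, ((A i - (lam i : ℂ) • 1) * (B - ν • 1)ᴴ) ⊗ₖ (Γ i * Matrix.fromBlocks 0 0 0 (-1)))ᴴ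

section Aux

variable {ι κ : Type*} [Fintype ι] [Fintype κ] [DecidableEq ι] [DecidableEq κ]

/-- Pure tensor of two Euclidean vectors. -/
noncomputable def tens (a : EuclideanSpace ℂ ι) (b : EuclideanSpace ℂ κ) :
    EuclideanSpace ℂ (ι × κ) := WithLp.toLp 2 (fun p : ι × κ => a p.1 * b p.2)

lemma inner_tens (a c : EuclideanSpace ℂ ι) (b d : EuclideanSpace ℂ κ) :
    ⟪tens a b, tens c d⟫_ℂ = ⟪a, c⟫_ℂ * ⟪b, d⟫_ℂ := by
  simp only [PiLp.inner_apply, tens, PiLp.toLp_apply, RCLike.inner_apply, Fintype.sum_prod_type,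
    Finset.sum_mul_sum]
  exact Finset.sum_congr rfl fun i _ => Finset.sum_congr rfl fun j _ => by
    rw [_root_.map_mul]; ring

lemma tens_zero (a : EuclideanSpace ℂ ι) : tens a (0 : EuclideanSpace ℂ κ) = 0 := by
  ext p; show a p.1 * 0 = 0; exact mul_zero _

lemma kron_tens (X : Matrix ι ι ℂ) (Y : Matrix κ κ ℂ) (a : EuclideanSpace ℂ ι)
    (b : EuclideanSpace ℂ κ) :
    Matrix.toEuclideanLin (X ⊗ₖ Y) (tens a b) =
      tens (Matrix.toEuclideanLin X a) (Matrix.toEuclideanLin Y b) := by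
  ext p
  show ∑ q : ι × κ, (X ⊗ₖ Y) p q * (a q.1 * b q.2) =
    (∑ q, X p.1 q * a q) * (∑ t, Y p.2 t * b t)
  rw [Fintype.sum_prod_type, Finset.sum_mul_sum]
  exact Finset.sum_congr rfl fun i _ => Finset.sum_congr rfl fun j _ => by
    simp [kroneckerMap_apply]; ring

lemma toEuclideanLin_mul (X Y : Matrix ι ι ℂ) (v : EuclideanSpace ℂ ι) :
    Matrix.toEuclideanLin (X * Y) v = Matrix.toEuclideanLin X (Matrix.toEuclideanLin Y v) := by
  ext p
  show ((X * Y) *ᵥ v.ofLp) p = (X *ᵥ (Y *ᵥ v.ofLp)) p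
  rw [Matrix.mulVec_mulVec]

lemma toEuclideanLin_one (v : EuclideanSpace ℂ ι) :
    Matrix.toEuclideanLin (1 : Matrix ι ι ℂ) v = v := by
  ext p
  show ((1 : Matrix ι ι ℂ) *ᵥ v.ofLp) p = v p
  rw [Matrix.one_mulVec]

lemma herm_inner_left {M : Matrix ι ι ℂ} (hM : M.IsHermitian) (x y : EuclideanSpace ℂ ι) :
    ⟪Matrix.toEuclideanLin M x, y⟫_ℂ = ⟪x, Matrix.toEuclideanLin M y⟫_ℂ := by
  conv_lhs => rw [← hM.eq, Matrix.toEuclideanLin_conjTranspose_eq_adjoint]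
  exact LinearMap.adjoint_inner_left _ _ _

lemma inner_conjTranspose (M : Matrix ι ι ℂ) (x : EuclideanSpace ℂ ι) :
    ⟪x, Matrix.toEuclideanLin Mᴴ x⟫_ℂ = conj (⟪x, Matrix.toEuclideanLin M x⟫_ℂ) := by
  rw [Matrix.toEuclideanLin_conjTranspose_eq_adjoint, LinearMap.adjoint_inner_right,
    inner_conj_symm]

lemma inner_opNorm_le {M : Matrix ι ι ℂ} {x : EuclideanSpace ℂ ι} (hx : ‖x‖ = 1) :
    ‖⟪x, Matrix.toEuclideanLin M x⟫_ℂ‖ ≤ opNorm M := by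
  calc ‖⟪x, Matrix.toEuclideanLin M x⟫_ℂ‖ ≤ ‖x‖ * ‖Matrix.toEuclideanLin M x‖ :=
        norm_inner_le_norm _ _
    _ ≤ ‖x‖ * (opNorm M * ‖x‖) := by
        gcongr
        exact (LinearMap.toContinuousLinearMap (Matrix.toEuclideanLin M)).le_opNorm x
    _ = opNorm M := by rw [hx]; ring

lemma norm_eq_one_of_inner {x : EuclideanSpace ℂ ι} (h : ⟪x, x⟫_ℂ = 1) : ‖x‖ = 1 := by
  have h2 := inner_self_eq_norm_sq_to_K (𝕜 := ℂ) x
  rw [h] at h2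
  have h3 : (‖x‖ : ℝ) ^ 2 = 1 := by
    have h4 := h2.symm
    rw [← RCLike.ofReal_pow, ← RCLike.ofReal_one (K := ℂ)] at h4
    exact RCLike.ofReal_inj.mp h4
  nlinarith [norm_nonneg x]

lemma re_inner_self (x : EuclideanSpace ℂ ι) : (⟪x, x⟫_ℂ).re = ‖x‖ ^ 2 := by
  rw [inner_self_eq_norm_sq_to_K (𝕜 := ℂ) x, ← RCLike.ofReal_pow]
  exact Complex.ofReal_re _

/-- Splitting a double sum into diagonal and off-diagonal parts. -/
lemma sum_split {d : ℕ} (h : Fin d → Fin d → ℝ) :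
    ∑ i, ∑ j, h i j = (∑ i, h i i)
      + ∑ p ∈ Finset.univ.filter (fun p : Fin d × Fin d => p.1 ≠ p.2), h p.1 p.2 := by
  rw [Finset.sum_filter, Fintype.sum_prod_type, ← Finset.sum_add_distrib]
  refine Finset.sum_congr rfl fun i _ => ?_
  have key : ∀ j, h i j = (if i = j then h i j else 0) + (if i ≠ j then h i j else 0) := by
    intro j; by_cases hij : i = j <;> simp [hij]
  calc ∑ j, h i j = ∑ j, ((if i = j then h i j else 0) + (if i ≠ j then h i j else 0)) :=
        Finset.sum_congr rfl fun j _ => key j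
    _ = h i i + ∑ j, (if i ≠ j then h i j else 0) := by
        rw [Finset.sum_add_distrib, Finset.sum_ite_eq Finset.univ i (h i)]
        simp

end Aux
theorem stmt7 {n d : ℕ} (m : ℕ) (hm : m = 2 ^ (d / 2))
    (A : Fin d → Matrix (Fin n) (Fin n) ℂ) (hA : ∀ i, (A i).IsHermitian)
    (B : Matrix (Fin n) (Fin n) ℂ) (hB : ¬ B.IsHermitian)
    (Γ : Fin d → Matrix (Fin m ⊕ Fin m) (Fin m ⊕ Fin m) ℂ)
    (hΓH : ∀ i, (Γ i).IsHermitian)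
    (hΓsq : ∀ i, Γ i * Γ i = 1)
    (hΓanti : ∀ i j, i ≠ j → Γ i * Γ j = -(Γ j * Γ i))
    (lam : Fin d → ℝ) (ν : ℂ) (ε₁ ε₂ : ℝ)
    (h₁ : ∃ ψ : EuclideanSpace ℂ (Fin n), ‖ψ‖ = 1 ∧
      (∑ i, ‖Matrix.toEuclideanLin (A i) ψ - (lam i : ℂ) • ψ‖ ^ 2)
        + ‖Matrix.toEuclideanLin B ψ - ν • ψ‖ ^ 2 ≤ ε₁)
    (h₂ : (∑ p ∈ Finset.univ.filter (fun p : Fin d × Fin d => p.1 ≠ p.2),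
            opNorm (A p.1 * A p.2 - A p.2 * A p.1)) + opNorm (crossF A Γ B lam ν) ≤ ε₂) :
    sigMin (localizer A Γ B lam ν) ≤ Real.sqrt (ε₁ + ε₂) := by
  classical
  obtain ⟨ψ, hψ, hψε⟩ := h₁
  have hm0 : 0 < m := by subst hm; positivity
  set i₀ : Fin m ⊕ Fin m := Sum.inl ⟨0, hm0⟩ with hi₀
  set e : EuclideanSpace ℂ (Fin m ⊕ Fin m) := EuclideanSpace.single i₀ 1 with he
  have he_apply : ∀ t, e t = if t = i₀ then 1 else 0 := fun t =>
    EuclideanSpace.single_apply i₀ 1 t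
  have hne : ‖e‖ = 1 := by rw [he]; simp
  have hee : ⟪e, e⟫_ℂ = 1 := by
    rw [inner_self_eq_norm_sq_to_K (𝕜 := ℂ), hne]; norm_num
  -- Hermiticity of the shifted matrices
  have hMH : ∀ i, (A i - (lam i : ℂ) • 1).IsHermitian := by
    intro i
    refine (hA i).sub ?_
    show ((lam i : ℂ) • (1 : Matrix (Fin n) (Fin n) ℂ))ᴴ = _
    rw [Matrix.conjTranspose_smul, Matrix.conjTranspose_one]
    norm_num [Complex.star_def, Complex.conj_ofReal]
  -- the tensor probe vector
  have hφ : ‖tens ψ e‖ = 1 := by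
    refine norm_eq_one_of_inner ?_
    rw [inner_tens, hee, inner_self_eq_norm_sq_to_K (𝕜 := ℂ), hψ]
    norm_num
  -- P and Q acting on e
  have hPe : Matrix.toEuclideanLin
      (Matrix.fromBlocks 1 0 0 0 : Matrix (Fin m ⊕ Fin m) (Fin m ⊕ Fin m) ℂ) e = e := by
    ext s
    show ∑ t, (Matrix.fromBlocks 1 0 0 0 : Matrix (Fin m ⊕ Fin m) (Fin m ⊕ Fin m) ℂ) s t * e t
      = e s
    have step : ∀ t, (Matrix.fromBlocks 1 0 0 0 : Matrix (Fin m ⊕ Fin m) (Fin m ⊕ Fin m) ℂ) s t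
        * e t = if t = i₀ then
          (Matrix.fromBlocks 1 0 0 0 : Matrix (Fin m ⊕ Fin m) (Fin m ⊕ Fin m) ℂ) s t else 0 := by
      intro t; rw [he_apply t]; split <;> simp
    rw [Finset.sum_congr rfl fun t _ => step t, Finset.sum_ite_eq' Finset.univ i₀]
    simp only [Finset.mem_univ, if_true]
    rw [he_apply s, hi₀]
    rcases s with a | a
    · simp [Matrix.one_apply]
    · simp
  have hQe : Matrix.toEuclideanLin
      (Matrix.fromBlocks 0 0 0 (-1) : Matrix (Fin m ⊕ Fin m) (Fin m ⊕ Fin m) ℂ) e = 0 := by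
    ext s
    show ∑ t, (Matrix.fromBlocks 0 0 0 (-1) : Matrix (Fin m ⊕ Fin m) (Fin m ⊕ Fin m) ℂ) s t * e t
      = 0
    have step : ∀ t, (Matrix.fromBlocks 0 0 0 (-1) : Matrix (Fin m ⊕ Fin m) (Fin m ⊕ Fin m) ℂ) s t
        * e t = if t = i₀ then
          (Matrix.fromBlocks 0 0 0 (-1) : Matrix (Fin m ⊕ Fin m) (Fin m ⊕ Fin m) ℂ) s t else 0 := by
      intro t; rw [he_apply t]; split <;> simp
    rw [Finset.sum_congr rfl fun t _ => step t, Finset.sum_ite_eq' Finset.univ i₀]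
    simp only [Finset.mem_univ, if_true]
    rw [hi₀]
    rcases s with a | a <;> simp
  -- action of the localizer on the probe vector
  have hTφ : Matrix.toEuclideanLin (localizer A Γ B lam ν) (tens ψ e)
      = (∑ i, tens (Matrix.toEuclideanLin (A i - (lam i : ℂ) • 1) ψ)
          (Matrix.toEuclideanLin (Γ i) e))
        + tens (Matrix.toEuclideanLin (B - ν • 1) ψ) e := by
    simp only [localizer, map_add, map_sum, LinearMap.add_apply, LinearMap.sum_apply, kron_tens,
      hPe, hQe, tens_zero, add_zero]
  -- inner products among the Clifford vectors
  have hgij : ∀ i j, ⟪Matrix.toEuclideanLin (Γ i) e, Matrix.toEuclideanLin (Γ j) e⟫_ℂ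
      = ⟪e, Matrix.toEuclideanLin (Γ i * Γ j) e⟫_ℂ := by
    intro i j
    rw [herm_inner_left (hΓH i), ← toEuclideanLin_mul]
  have hgii : ∀ i, ⟪Matrix.toEuclideanLin (Γ i) e, Matrix.toEuclideanLin (Γ i) e⟫_ℂ = 1 := by
    intro i; rw [hgij, hΓsq, toEuclideanLin_one, hee]
  have hgn : ∀ i, ‖Matrix.toEuclideanLin (Γ i) e‖ = 1 := fun i => norm_eq_one_of_inner (hgii i)
  have hganti : ∀ i j, i ≠ j →
      ⟪Matrix.toEuclideanLin (Γ j) e, Matrix.toEuclideanLin (Γ i) e⟫_ℂ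
        = -⟪Matrix.toEuclideanLin (Γ i) e, Matrix.toEuclideanLin (Γ j) e⟫_ℂ := by
    intro i j hij
    rw [hgij, hgij, hΓanti j i (Ne.symm hij), map_neg, LinearMap.neg_apply, inner_neg_right]
  -- expansion of the norm squared
  have expand : ⟪Matrix.toEuclideanLin (localizer A Γ B lam ν) (tens ψ e),
      Matrix.toEuclideanLin (localizer A Γ B lam ν) (tens ψ e)⟫_ℂ
      = (∑ i, ∑ j, ⟪Matrix.toEuclideanLin (A i - (lam i : ℂ) • 1) ψ,
            Matrix.toEuclideanLin (A j - (lam j : ℂ) • 1) ψ⟫_ℂ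
          * ⟪Matrix.toEuclideanLin (Γ i) e, Matrix.toEuclideanLin (Γ j) e⟫_ℂ)
        + ((∑ i, ⟪Matrix.toEuclideanLin (A i - (lam i : ℂ) • 1) ψ,
              Matrix.toEuclideanLin (B - ν • 1) ψ⟫_ℂ
            * ⟪Matrix.toEuclideanLin (Γ i) e, e⟫_ℂ)
          + conj (∑ i, ⟪Matrix.toEuclideanLin (A i - (lam i : ℂ) • 1) ψ,
              Matrix.toEuclideanLin (B - ν • 1) ψ⟫_ℂ
            * ⟪Matrix.toEuclideanLin (Γ i) e, e⟫_ℂ)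
          + ⟪Matrix.toEuclideanLin (B - ν • 1) ψ, Matrix.toEuclideanLin (B - ν • 1) ψ⟫_ℂ) := by
    rw [hTφ]
    simp only [inner_add_left, inner_add_right, sum_inner, inner_sum, inner_tens, hee, mul_one,
      map_sum, _root_.map_mul, inner_conj_symm, Finset.sum_add_distrib]
    rw [Finset.sum_comm]
    ring
  -- identification of the cross term with ⟪φ, F φ⟫
  have hcross : (∑ i, ⟪Matrix.toEuclideanLin (A i - (lam i : ℂ) • 1) ψ,
          Matrix.toEuclideanLin (B - ν • 1) ψ⟫_ℂ * ⟪Matrix.toEuclideanLin (Γ i) e, e⟫_ℂ)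
      + conj (∑ i, ⟪Matrix.toEuclideanLin (A i - (lam i : ℂ) • 1) ψ,
          Matrix.toEuclideanLin (B - ν • 1) ψ⟫_ℂ * ⟪Matrix.toEuclideanLin (Γ i) e, e⟫_ℂ)
      = ⟪tens ψ e, Matrix.toEuclideanLin (crossF A Γ B lam ν) (tens ψ e)⟫_ℂ := by
    have hβ : ∀ i, ⟪ψ, Matrix.toEuclideanLin (A i - (lam i : ℂ) • 1)
        (Matrix.toEuclideanLin (B - ν • 1) ψ)⟫_ℂ
        = ⟪Matrix.toEuclideanLin (A i - (lam i : ℂ) • 1) ψ,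
            Matrix.toEuclideanLin (B - ν • 1) ψ⟫_ℂ := fun i =>
      (herm_inner_left (hMH i) ψ _).symm
    have hti : ∀ i, ⟪e, Matrix.toEuclideanLin (Γ i) e⟫_ℂ
        = ⟪Matrix.toEuclideanLin (Γ i) e, e⟫_ℂ := fun i =>
      (herm_inner_left (hΓH i) e e).symm
    simp only [crossF, map_add, LinearMap.add_apply, inner_add_right, inner_conjTranspose,
      map_sum, LinearMap.sum_apply, inner_sum, kron_tens, toEuclideanLin_mul, hPe, hQe,
      map_zero, tens_zero, inner_zero_right, Finset.sum_const_zero, add_zero, inner_tens,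
      hβ, hti]
  -- off-diagonal bound
  have hoff : ∀ i j, i ≠ j →
      (⟪Matrix.toEuclideanLin (A i - (lam i : ℂ) • 1) ψ,
          Matrix.toEuclideanLin (A j - (lam j : ℂ) • 1) ψ⟫_ℂ
        * ⟪Matrix.toEuclideanLin (Γ i) e, Matrix.toEuclideanLin (Γ j) e⟫_ℂ).re
      + (⟪Matrix.toEuclideanLin (A j - (lam j : ℂ) • 1) ψ,
          Matrix.toEuclideanLin (A i - (lam i : ℂ) • 1) ψ⟫_ℂ
        * ⟪Matrix.toEuclideanLin (Γ j) e, Matrix.toEuclideanLin (Γ i) e⟫_ℂ).re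
        ≤ 2 * opNorm (A i * A j - A j * A i) := by
    intro i j hij
    have hxx : ∀ k l, ⟪Matrix.toEuclideanLin (A k - (lam k : ℂ) • 1) ψ,
        Matrix.toEuclideanLin (A l - (lam l : ℂ) • 1) ψ⟫_ℂ
        = ⟪ψ, Matrix.toEuclideanLin ((A k - (lam k : ℂ) • 1) * (A l - (lam l : ℂ) • 1)) ψ⟫_ℂ := by
      intro k l
      rw [toEuclideanLin_mul, ← herm_inner_left (hMH k)]
    have hconj : ⟪Matrix.toEuclideanLin (A j - (lam j : ℂ) • 1) ψ,
        Matrix.toEuclideanLin (A i - (lam i : ℂ) • 1) ψ⟫_ℂ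
        = conj ⟪Matrix.toEuclideanLin (A i - (lam i : ℂ) • 1) ψ,
            Matrix.toEuclideanLin (A j - (lam j : ℂ) • 1) ψ⟫_ℂ := (inner_conj_symm _ _).symm
    have hcomm : (A i - (lam i : ℂ) • 1) * (A j - (lam j : ℂ) • 1)
        - (A j - (lam j : ℂ) • 1) * (A i - (lam i : ℂ) • 1) = A i * A j - A j * A i := by
      simp only [Matrix.sub_mul, Matrix.mul_sub, Matrix.smul_mul, Matrix.mul_smul,
        Matrix.one_mul, Matrix.mul_one, smul_smul, smul_sub, smul_add,
        mul_comm ((lam i : ℂ)) ((lam j : ℂ))]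
      abel
    set α := ⟪Matrix.toEuclideanLin (A i - (lam i : ℂ) • 1) ψ,
        Matrix.toEuclideanLin (A j - (lam j : ℂ) • 1) ψ⟫_ℂ with hα
    set c := ⟪Matrix.toEuclideanLin (Γ i) e, Matrix.toEuclideanLin (Γ j) e⟫_ℂ with hc
    have hδ : α - conj α = ⟪ψ, Matrix.toEuclideanLin (A i * A j - A j * A i) ψ⟫_ℂ := by
      rw [← hcomm, map_sub, LinearMap.sub_apply, inner_sub_right, ← hxx i j, ← hxx j i, hconj,
        ← hα]
    have hcnorm : ‖c‖ ≤ 1 := by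
      rw [hc]
      calc ‖⟪Matrix.toEuclideanLin (Γ i) e, Matrix.toEuclideanLin (Γ j) e⟫_ℂ‖
          ≤ ‖Matrix.toEuclideanLin (Γ i) e‖ * ‖Matrix.toEuclideanLin (Γ j) e‖ :=
            norm_inner_le_norm _ _
        _ = 1 := by rw [hgn i, hgn j]; norm_num
    have hkey : (α * c).re + ((conj α) * (-c)).re ≤ 2 * opNorm (A i * A j - A j * A i) := by
      have hsum : α * c + (conj α) * (-c) = (α - conj α) * c := by ring
      have h1 : (α * c).re + ((conj α) * (-c)).re = ((α - conj α) * c).re := by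
        rw [← Complex.add_re, hsum]
      rw [h1]
      calc ((α - conj α) * c).re ≤ ‖(α - conj α) * c‖ := by
            exact Complex.re_le_norm _
        _ = ‖α - conj α‖ * ‖c‖ := norm_mul _ _
        _ ≤ opNorm (A i * A j - A j * A i) * 1 := by
            refine mul_le_mul ?_ hcnorm (norm_nonneg _) (norm_nonneg _)
            rw [hδ]
            exact inner_opNorm_le hψ
        _ ≤ 2 * opNorm (A i * A j - A j * A i) := by
            have := norm_nonneg (LinearMap.toContinuousLinearMap
              (Matrix.toEuclideanLin (A i * A j - A j * A i)))
            simp only [opNorm]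
            linarith
    rw [hconj, hganti i j hij, ← hc]
    exact hkey
  -- the main estimate
  have hmain : ‖Matrix.toEuclideanLin (localizer A Γ B lam ν) (tens ψ e)‖ ^ 2 ≤ ε₁ + ε₂ := by
    have hre : ‖Matrix.toEuclideanLin (localizer A Γ B lam ν) (tens ψ e)‖ ^ 2
        = (⟪Matrix.toEuclideanLin (localizer A Γ B lam ν) (tens ψ e),
            Matrix.toEuclideanLin (localizer A Γ B lam ν) (tens ψ e)⟫_ℂ).re :=
      (re_inner_self _).symm
    have hxval : ∀ i, Matrix.toEuclideanLin (A i - (lam i : ℂ) • 1) ψ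
        = Matrix.toEuclideanLin (A i) ψ - (lam i : ℂ) • ψ := by
      intro i
      simp only [map_sub, _root_.map_smul, LinearMap.sub_apply, LinearMap.smul_apply, toEuclideanLin_one]
    have hyval : Matrix.toEuclideanLin (B - ν • 1) ψ = Matrix.toEuclideanLin B ψ - ν • ψ := by
      simp only [map_sub, _root_.map_smul, LinearMap.sub_apply, LinearMap.smul_apply, toEuclideanLin_one]
    have hdd : (∑ i, ∑ j, ⟪Matrix.toEuclideanLin (A i - (lam i : ℂ) • 1) ψ,
            Matrix.toEuclideanLin (A j - (lam j : ℂ) • 1) ψ⟫_ℂ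
          * ⟪Matrix.toEuclideanLin (Γ i) e, Matrix.toEuclideanLin (Γ j) e⟫_ℂ).re
        = (∑ i, ‖Matrix.toEuclideanLin (A i) ψ - (lam i : ℂ) • ψ‖ ^ 2)
          + ∑ p ∈ Finset.univ.filter (fun p : Fin d × Fin d => p.1 ≠ p.2),
              (⟪Matrix.toEuclideanLin (A p.1 - (lam p.1 : ℂ) • 1) ψ,
                  Matrix.toEuclideanLin (A p.2 - (lam p.2 : ℂ) • 1) ψ⟫_ℂ
                * ⟪Matrix.toEuclideanLin (Γ p.1) e, Matrix.toEuclideanLin (Γ p.2) e⟫_ℂ).re := by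
      simp only [Complex.re_sum]
      rw [sum_split (fun i j => (⟪Matrix.toEuclideanLin (A i - (lam i : ℂ) • 1) ψ,
            Matrix.toEuclideanLin (A j - (lam j : ℂ) • 1) ψ⟫_ℂ
          * ⟪Matrix.toEuclideanLin (Γ i) e, Matrix.toEuclideanLin (Γ j) e⟫_ℂ).re)]
      congr 1
      refine Finset.sum_congr rfl fun i _ => ?_
      rw [hgii i, mul_one, hxval i, re_inner_self]
    have hoffsum : (∑ p ∈ Finset.univ.filter (fun p : Fin d × Fin d => p.1 ≠ p.2),
            (⟪Matrix.toEuclideanLin (A p.1 - (lam p.1 : ℂ) • 1) ψ,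
                Matrix.toEuclideanLin (A p.2 - (lam p.2 : ℂ) • 1) ψ⟫_ℂ
              * ⟪Matrix.toEuclideanLin (Γ p.1) e, Matrix.toEuclideanLin (Γ p.2) e⟫_ℂ).re)
        ≤ ∑ p ∈ Finset.univ.filter (fun p : Fin d × Fin d => p.1 ≠ p.2),
            opNorm (A p.1 * A p.2 - A p.2 * A p.1) := by
      set f : Fin d × Fin d → ℝ := fun p =>
        (⟪Matrix.toEuclideanLin (A p.1 - (lam p.1 : ℂ) • 1) ψ,
            Matrix.toEuclideanLin (A p.2 - (lam p.2 : ℂ) • 1) ψ⟫_ℂ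
          * ⟪Matrix.toEuclideanLin (Γ p.1) e, Matrix.toEuclideanLin (Γ p.2) e⟫_ℂ).re with hf
      set gN : Fin d × Fin d → ℝ := fun p => opNorm (A p.1 * A p.2 - A p.2 * A p.1) with hgN
      set filt := Finset.univ.filter (fun p : Fin d × Fin d => p.1 ≠ p.2) with hfilt
      have hswap : ∑ p ∈ filt, f p = ∑ p ∈ filt, f p.swap := by
        refine Finset.sum_equiv (Equiv.prodComm (Fin d) (Fin d)) ?_ ?_
        · intro p
          simp only [hfilt, Finset.mem_filter, Finset.mem_univ, true_and, Equiv.prodComm_apply]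
          exact ne_comm
        · intro p _
          rfl
      have h2S : 2 * (∑ p ∈ filt, f p) = ∑ p ∈ filt, (f p + f p.swap) := by
        rw [Finset.sum_add_distrib, ← hswap]; ring
      have hle : ∑ p ∈ filt, (f p + f p.swap) ≤ ∑ p ∈ filt, 2 * gN p := by
        refine Finset.sum_le_sum fun p hp => ?_
        have hp' : p.1 ≠ p.2 := (Finset.mem_filter.mp hp).2
        exact hoff p.1 p.2 hp'
      have hms : ∑ p ∈ filt, 2 * gN p = 2 * ∑ p ∈ filt, gN p := by rw [Finset.mul_sum]
      linarith
    have hcrossre : ((∑ i, ⟪Matrix.toEuclideanLin (A i - (lam i : ℂ) • 1) ψ,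
            Matrix.toEuclideanLin (B - ν • 1) ψ⟫_ℂ * ⟪Matrix.toEuclideanLin (Γ i) e, e⟫_ℂ)).re
        + (conj (∑ i, ⟪Matrix.toEuclideanLin (A i - (lam i : ℂ) • 1) ψ,
            Matrix.toEuclideanLin (B - ν • 1) ψ⟫_ℂ * ⟪Matrix.toEuclideanLin (Γ i) e, e⟫_ℂ)).re
        ≤ opNorm (crossF A Γ B lam ν) := by
      rw [← Complex.add_re, hcross]
      calc (⟪tens ψ e, Matrix.toEuclideanLin (crossF A Γ B lam ν) (tens ψ e)⟫_ℂ).re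
          ≤ ‖⟪tens ψ e, Matrix.toEuclideanLin (crossF A Γ B lam ν) (tens ψ e)⟫_ℂ‖ := by
            exact Complex.re_le_norm _
        _ ≤ opNorm (crossF A Γ B lam ν) := inner_opNorm_le hφ
    have hyy : (⟪Matrix.toEuclideanLin (B - ν • 1) ψ, Matrix.toEuclideanLin (B - ν • 1) ψ⟫_ℂ).re
        = ‖Matrix.toEuclideanLin B ψ - ν • ψ‖ ^ 2 := by
      rw [hyval]; exact re_inner_self _
    rw [hre, expand]
    simp only [Complex.add_re]
    rw [hdd, hyy]
    linarith
  -- conclude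
  have hσ : sigMin (localizer A Γ B lam ν)
      ≤ ‖Matrix.toEuclideanLin (localizer A Γ B lam ν) (tens ψ e)‖ := by
    refine csInf_le ⟨0, ?_⟩ ⟨tens ψ e, hφ, rfl⟩
    rintro r ⟨w, -, rfl⟩
    exact norm_nonneg _
  refine hσ.trans ?_
  have h0 : ‖Matrix.toEuclideanLin (localizer A Γ B lam ν) (tens ψ e)‖
      = Real.sqrt (‖Matrix.toEuclideanLin (localizer A Γ B lam ν) (tens ψ e)‖ ^ 2) := by
    rw [Real.sqrt_sq (norm_nonneg _)]
  rw [h0]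
  exact Real.sqrt_le_sqrt hmain
end

section
/- Locality of the right quadratic gap: let A be a d₁-tuple of commuting invertible Hermitian matrices, B and C be d₂-tuples of matrices in M_n(ℂ), set Z² = Σ_i (A_i−λ_i)² (assumed invertible). If ‖Z^{-1}(Σ_j (B_j−ν_j)†C_j + C_j†(B_j−ν_j) + C_j†C_j)Z^{-1}‖ ≤ K for some K < 1, then (1−K)^{1/2} μ^{RQ}_{(λ,ν)}(A,B) ≤ μ^{RQ}_{(λ,ν)}(A,B+C) ≤ (1+K)^{1/2} μ^{RQ}_{(λ,ν)}(A,B). -/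
open Matrix
open scoped ComplexOrder

/-- The right quadratic composite operator. -/
noncomputable def RQ {n d₁ d₂ : ℕ}
    (A : Fin d₁ → Matrix (Fin n) (Fin n) ℂ) (B : Fin d₂ → Matrix (Fin n) (Fin n) ℂ)
    (lam : Fin d₁ → ℝ) (ν : Fin d₂ → ℂ) : Matrix (Fin n) (Fin n) ℂ :=
  (∑ i, (A i - (lam i : ℂ) • 1) ^ 2) + ∑ j, (B j - ν j • 1)ᴴ * (B j - ν j • 1)

namespace Stmt14Aux
variable {n : ℕ}

/-- The quadratic form associated to a matrix. -/
noncomputable def quad (P : Matrix (Fin n) (Fin n) ℂ) (ψ : EuclideanSpace ℂ (Fin n)) : ℂ :=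
  star ((WithLp.equiv 2 _) ψ) ⬝ᵥ (P *ᵥ (WithLp.equiv 2 _) ψ)

lemma quad_eq_inner (P : Matrix (Fin n) (Fin n) ℂ) (ψ : EuclideanSpace ℂ (Fin n)) :
    quad P ψ = inner ℂ ψ (Matrix.toEuclideanLin P ψ) := by
  rw [EuclideanSpace.inner_eq_star_dotProduct, dotProduct_comm]
  rfl

lemma quad_add (P Q : Matrix (Fin n) (Fin n) ℂ) (ψ : EuclideanSpace ℂ (Fin n)) :
    quad (P + Q) ψ = quad P ψ + quad Q ψ := by
  simp [quad, Matrix.add_mulVec, dotProduct_add]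

lemma norm_sq_eq (ψ : EuclideanSpace ℂ (Fin n)) :
    ((‖ψ‖ ^ 2 : ℝ) : ℂ) = star ((WithLp.equiv 2 _) ψ) ⬝ᵥ ((WithLp.equiv 2 _) ψ) := by
  show ((‖ψ‖ ^ 2 : ℝ) : ℂ) = star (WithLp.ofLp ψ) ⬝ᵥ WithLp.ofLp ψ
  rw [dotProduct_comm, ← EuclideanSpace.inner_eq_star_dotProduct, inner_self_eq_norm_sq_to_K]
  norm_num

lemma sub_smul_posSemidef {P : Matrix (Fin n) (Fin n) ℂ} (hP : P.IsHermitian) {c : ℝ}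
    (hc : ∀ i, c ≤ hP.eigenvalues i) : (P - (c : ℂ) • 1).PosSemidef := by
  have hU := (Matrix.mem_unitaryGroup_iff).mp (hP.eigenvectorUnitary).2
  have h1 : ((c : ℂ) • 1 : Matrix (Fin n) (Fin n) ℂ) =
      (hP.eigenvectorUnitary : Matrix (Fin n) (Fin n) ℂ) * ((c : ℂ) • 1) *
        (star (hP.eigenvectorUnitary : Matrix (Fin n) (Fin n) ℂ)) := by
    rw [Matrix.mul_smul, Matrix.smul_mul, mul_one, hU]
  have h2 : P - (c : ℂ) • 1 =
      (hP.eigenvectorUnitary : Matrix (Fin n) (Fin n) ℂ) *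
        (diagonal (fun i => ((hP.eigenvalues i - c : ℝ) : ℂ))) *
        (star (hP.eigenvectorUnitary : Matrix (Fin n) (Fin n) ℂ)) := by
    conv_lhs => rw [hP.spectral_theorem, Unitary.conjStarAlgAut_apply, h1]
    rw [← Matrix.sub_mul, ← Matrix.mul_sub]
    congr 2
    rw [Matrix.smul_one_eq_diagonal, Matrix.diagonal_sub]
    refine congrArg diagonal (funext fun i => ?_)
    push_cast [Function.comp]
    norm_num
  rw [h2]
  exact (Matrix.posSemidef_diagonal_iff.mpr fun i => by
    rw [Complex.zero_le_real]; linarith [hc i]).mul_mul_conjTranspose_same _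

/-- quadratic lower bound from min eigenvalue -/
lemma quad_ge {P : Matrix (Fin n) (Fin n) ℂ} (hP : P.IsHermitian) {c : ℝ}
    (hc : ∀ i, c ≤ hP.eigenvalues i) (ψ : EuclideanSpace ℂ (Fin n)) (hψ : ‖ψ‖ = 1) :
    (c : ℂ) ≤ quad P ψ := by
  have h := (sub_smul_posSemidef hP hc).dotProduct_mulVec_nonneg ((WithLp.equiv 2 _) ψ)
  rw [Matrix.sub_mulVec, dotProduct_sub, Matrix.smul_mulVec,
    Matrix.one_mulVec, dotProduct_smul, ← norm_sq_eq, hψ] at h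
  rw [sub_nonneg] at h
  simpa [quad] using h

lemma sigMin_spec {P : Matrix (Fin n) (Fin n) ℂ} (hn : 0 < n) (hP : P.PosSemidef) :
    (∃ ψ : EuclideanSpace ℂ (Fin n), ‖ψ‖ = 1 ∧ quad P ψ = (sigMin P : ℂ)) ∧
      (∀ ψ : EuclideanSpace ℂ (Fin n), ‖ψ‖ = 1 → (sigMin P : ℂ) ≤ quad P ψ) := by
  haveI : Nonempty (Fin n) := ⟨⟨0, hn⟩⟩
  obtain ⟨i₀, -, hi₀⟩ := Finset.exists_min_image Finset.univ hP.1.eigenvalues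
    ⟨Classical.arbitrary _, Finset.mem_univ _⟩
  set c := hP.1.eigenvalues i₀ with hc
  have hc0 : 0 ≤ c := hP.eigenvalues_nonneg i₀
  have hcmin : ∀ i, c ≤ hP.1.eigenvalues i := fun i => hi₀ i (Finset.mem_univ i)
  set ψ₀ : EuclideanSpace ℂ (Fin n) := hP.1.eigenvectorBasis i₀ with hψ₀def
  have hψ₀norm : ‖ψ₀‖ = 1 := hP.1.eigenvectorBasis.orthonormal.1 i₀
  have hev : Matrix.toEuclideanLin P ψ₀ = (c : ℂ) • ψ₀ := by
    apply (WithLp.equiv 2 (Fin n → ℂ)).injective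
    rw [WithLp.equiv_apply, WithLp.equiv_apply, Matrix.ofLp_toEuclideanLin_apply]
    have := hP.1.mulVec_eigenvectorBasis i₀
    simpa [Complex.real_smul] using this
  have hPψ₀ : ‖Matrix.toEuclideanLin P ψ₀‖ = c := by
    rw [hev, norm_smul, hψ₀norm, mul_one, Complex.norm_real, Real.norm_eq_abs, abs_of_nonneg hc0]
  set S := {r : ℝ | ∃ ψ : EuclideanSpace ℂ (Fin n), ‖ψ‖ = 1 ∧ r = ‖Matrix.toEuclideanLin P ψ‖}
  have hSne : S.Nonempty := ⟨_, ψ₀, hψ₀norm, rfl⟩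
  have hlb : ∀ r ∈ S, c ≤ r := by
    rintro r ⟨ψ, hψ, rfl⟩
    have h1 : (c : ℂ) ≤ quad P ψ := quad_ge hP.1 hcmin ψ hψ
    have h2 : c ≤ (quad P ψ).re := by
      rw [Complex.le_def] at h1; simpa using h1.1
    calc c ≤ (quad P ψ).re := h2
      _ ≤ ‖quad P ψ‖ := Complex.re_le_norm _
      _ ≤ ‖ψ‖ * ‖Matrix.toEuclideanLin P ψ‖ := by
          rw [quad_eq_inner]; exact norm_inner_le_norm _ _
      _ = ‖Matrix.toEuclideanLin P ψ‖ := by rw [hψ, one_mul]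
  have hsig : sigMin P = c := by
    refine le_antisymm (csInf_le ⟨c, hlb⟩ ?_) (le_csInf hSne hlb)
    exact ⟨ψ₀, hψ₀norm, hPψ₀.symm⟩
  refine ⟨⟨ψ₀, hψ₀norm, ?_⟩, fun ψ hψ => ?_⟩
  · rw [hsig, quad_eq_inner, hev, inner_smul_right, inner_self_eq_norm_sq_to_K, hψ₀norm]
    norm_num
  · rw [hsig]; exact quad_ge hP.1 hcmin ψ hψ

lemma posSemidef_sum {ι : Type*} (s : Finset ι) (f : ι → Matrix (Fin n) (Fin n) ℂ)
    (h : ∀ i ∈ s, (f i).PosSemidef) : (∑ i ∈ s, f i).PosSemidef :=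
  Finset.sum_induction f _ (fun _ _ ha hb => ha.add hb) Matrix.PosSemidef.zero h

lemma sq_posSemidef {H : Matrix (Fin n) (Fin n) ℂ} (hH : H.IsHermitian) :
    (H ^ 2).PosSemidef := by
  rw [pow_two]
  nth_rewrite 1 [← hH.eq]
  exact Matrix.posSemidef_conjTranspose_mul_self H

lemma shift_isHermitian {H : Matrix (Fin n) (Fin n) ℂ} (hH : H.IsHermitian) (c : ℝ) :
    (H - (c : ℂ) • 1).IsHermitian := by
  unfold Matrix.IsHermitian
  rw [Matrix.conjTranspose_sub, hH.eq, Matrix.conjTranspose_smul]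
  congr 1
  simp

lemma herm_dot {Z : Matrix (Fin n) (Fin n) ℂ} (hZ : Zᴴ = Z) (v w : Fin n → ℂ) :
    star v ⬝ᵥ (Z *ᵥ w) = star (Z *ᵥ v) ⬝ᵥ w := by
  rw [Matrix.star_mulVec, hZ, Matrix.dotProduct_mulVec]

end Stmt14Aux

open Stmt14Aux in
theorem stmt14 {n d₁ d₂ : ℕ}
    (A : Fin d₁ → Matrix (Fin n) (Fin n) ℂ)
    (hA : ∀ i, (A i).IsHermitian)
    (hAcomm : ∀ i j, A i * A j = A j * A i)
    (hAinv : ∀ i, IsUnit (A i))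
    (B C : Fin d₂ → Matrix (Fin n) (Fin n) ℂ)
    (lam : Fin d₁ → ℝ) (ν : Fin d₂ → ℂ)
    (Z : Matrix (Fin n) (Fin n) ℂ) (hZpsd : Z.PosSemidef)
    (hZsq : Z * Z = ∑ i, (A i - (lam i : ℂ) • 1) ^ 2)
    (hZunit : IsUnit Z)
    (K : ℝ) (hK : K < 1)
    (hbound : opNorm (Z⁻¹ *
        (∑ j, ((B j - ν j • 1)ᴴ * C j + (C j)ᴴ * (B j - ν j • 1) + (C j)ᴴ * C j)) * Z⁻¹) ≤ K) :
    Real.sqrt (1 - K) * Real.sqrt (sigMin (RQ A B lam ν)) ≤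
        Real.sqrt (sigMin (RQ A (fun j => B j + C j) lam ν)) ∧
      Real.sqrt (sigMin (RQ A (fun j => B j + C j) lam ν)) ≤
        Real.sqrt (1 + K) * Real.sqrt (sigMin (RQ A B lam ν)) := by
  have hK0 : 0 ≤ K := le_trans (norm_nonneg _) hbound
  rcases Nat.eq_zero_or_pos n with hn | hn
  · subst hn
    have hempty : ∀ Q : Matrix (Fin 0) (Fin 0) ℂ, sigMin Q = 0 := by
      intro Q
      have hS : {r : ℝ | ∃ ψ : EuclideanSpace ℂ (Fin 0), ‖ψ‖ = 1 ∧
          r = ‖Matrix.toEuclideanLin Q ψ‖} = ∅ := by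
        ext r
        simp only [Set.mem_setOf_eq, Set.mem_empty_iff_false, iff_false, not_exists]
        rintro ψ ⟨hψ, -⟩
        rw [Subsingleton.elim ψ 0, norm_zero] at hψ
        norm_num at hψ
      rw [sigMin, hS, Real.sInf_empty]
    rw [hempty, hempty]
    simp
  -- main case
  set M := RQ A B lam ν with hM
  set N := RQ A (fun j => B j + C j) lam ν with hN
  set E := ∑ j, ((B j - ν j • 1)ᴴ * C j + (C j)ᴴ * (B j - ν j • 1) + (C j)ᴴ * C j) with hE
  set D := Z⁻¹ * E * Z⁻¹ with hD
  have hZherm : Zᴴ = Z := hZpsd.1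
  have hdet : IsUnit Z.det := (Matrix.isUnit_iff_isUnit_det _).mp hZunit
  have hZ2psd : (∑ i, (A i - (lam i : ℂ) • 1) ^ 2).PosSemidef :=
    posSemidef_sum _ _ fun i _ => sq_posSemidef (shift_isHermitian (hA i) (lam i))
  have hYpsd : ∀ B' : Fin d₂ → Matrix (Fin n) (Fin n) ℂ,
      (∑ j, (B' j - ν j • 1)ᴴ * (B' j - ν j • 1)).PosSemidef :=
    fun B' => posSemidef_sum _ _ fun j _ => Matrix.posSemidef_conjTranspose_mul_self _
  have hMpsd : M.PosSemidef := hZ2psd.add (hYpsd B)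
  have hNpsd : N.PosSemidef := hZ2psd.add (hYpsd _)
  -- decomposition N = M + E
  have hNME : N = M + E := by
    rw [hN, hM, hE, RQ, RQ, add_assoc, ← Finset.sum_add_distrib]
    congr 1
    refine Finset.sum_congr rfl fun j _ => ?_
    have hBC : B j + C j - ν j • 1 = (B j - ν j • 1) + C j := by abel
    rw [hBC, Matrix.conjTranspose_add, Matrix.add_mul, Matrix.mul_add, Matrix.mul_add]
    abel
  -- E = Z * D * Z
  have hEZ : E = Z * D * Z := by
    rw [hD]
    rw [Matrix.mul_assoc, Matrix.mul_assoc, Matrix.nonsing_inv_mul Z hdet, Matrix.mul_one,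
      ← Matrix.mul_assoc, Matrix.mul_nonsing_inv Z hdet, Matrix.one_mul]
  -- key quadratic estimate
  have key : ∀ ψ : EuclideanSpace ℂ (Fin n), ‖ψ‖ = 1 →
      (1 - K) * (quad M ψ).re ≤ (quad N ψ).re ∧
        (quad N ψ).re ≤ (1 + K) * (quad M ψ).re := by
    intro ψ hψ
    set φ : EuclideanSpace ℂ (Fin n) := Matrix.toEuclideanLin Z ψ with hφ
    have hφc : (WithLp.equiv 2 (Fin n → ℂ)) φ = Z *ᵥ (WithLp.equiv 2 (Fin n → ℂ)) ψ :=
      Matrix.ofLp_toEuclideanLin_apply Z ψ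
    -- quad E ψ = quad D φ
    have hqE : quad E ψ = quad D φ := by
      rw [quad, quad, hφc, hEZ]
      rw [← Matrix.mulVec_mulVec, ← Matrix.mulVec_mulVec, herm_dot hZherm]
    -- |quad D φ| ≤ K * ‖φ‖²
    have hDφ : ‖Matrix.toEuclideanLin D φ‖ ≤ K * ‖φ‖ := by
      have h1 : ‖Matrix.toEuclideanLin D φ‖ ≤ opNorm D * ‖φ‖ := by
        have h := (LinearMap.toContinuousLinearMap (Matrix.toEuclideanLin D)).le_opNorm φ
        rwa [LinearMap.coe_toContinuousLinearMap'] at h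
      exact h1.trans (mul_le_mul_of_nonneg_right hbound (norm_nonneg _))
    have hqEbound : ‖quad E ψ‖ ≤ K * ‖φ‖ ^ 2 := by
      rw [hqE, quad_eq_inner]
      calc ‖(inner ℂ φ (Matrix.toEuclideanLin D φ) : ℂ)‖
          ≤ ‖φ‖ * ‖Matrix.toEuclideanLin D φ‖ := norm_inner_le_norm _ _
        _ ≤ ‖φ‖ * (K * ‖φ‖) := mul_le_mul_of_nonneg_left hDφ (norm_nonneg _)
        _ = K * ‖φ‖ ^ 2 := by ring
    -- ‖φ‖² = re (quad (Z*Z) ψ) ≤ re (quad M ψ)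
    have hZZq : quad (Z * Z) ψ = ((‖φ‖ ^ 2 : ℝ) : ℂ) := by
      rw [quad, norm_sq_eq φ, hφc, ← Matrix.mulVec_mulVec, herm_dot hZherm]
    have hMsplit : quad M ψ = quad (Z * Z) ψ + quad (∑ j, (B j - ν j • 1)ᴴ * (B j - ν j • 1)) ψ := by
      rw [hM, RQ, quad_add, hZsq]
    have hMre : ‖φ‖ ^ 2 ≤ (quad M ψ).re := by
      have h0 := hYpsd B
      have h1 : 0 ≤ (quad (∑ j, (B j - ν j • 1)ᴴ * (B j - ν j • 1)) ψ).re := by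
        have := (Complex.le_def.mp (h0.dotProduct_mulVec_nonneg ((WithLp.equiv 2 _) ψ))).1
        simpa [quad] using this
      have := congrArg Complex.re hMsplit
      rw [Complex.add_re, hZZq, Complex.ofReal_re] at this
      linarith
    -- realness
    have hMr : quad M ψ = (((quad M ψ).re : ℝ) : ℂ) := by
      have h := Complex.le_def.mp (hMpsd.dotProduct_mulVec_nonneg ((WithLp.equiv 2 _) ψ))
      apply Complex.ext
      · simp
      · simp only [Complex.ofReal_im]
        have : (0 : ℂ).im = (quad M ψ).im := h.2
        simpa [quad] using this.symm
    have hNr : quad N ψ = (((quad N ψ).re : ℝ) : ℂ) := by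
      have h := Complex.le_def.mp (hNpsd.dotProduct_mulVec_nonneg ((WithLp.equiv 2 _) ψ))
      apply Complex.ext
      · simp
      · simp only [Complex.ofReal_im]
        have : (0 : ℂ).im = (quad N ψ).im := h.2
        simpa [quad] using this.symm
    have hsum : quad N ψ = quad M ψ + quad E ψ := by rw [hNME, quad_add]
    have hsub : quad N ψ - quad M ψ = (((quad N ψ).re - (quad M ψ).re : ℝ) : ℂ) := by
      rw [Complex.ofReal_sub]
      conv_lhs => rw [hNr, hMr]
    have hEr : quad E ψ = (((quad N ψ).re - (quad M ψ).re : ℝ) : ℂ) := by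
      rw [← hsub, hsum]; ring
    have habs : |(quad N ψ).re - (quad M ψ).re| ≤ K * (quad M ψ).re := by
      have h1 : ‖quad E ψ‖ = |(quad N ψ).re - (quad M ψ).re| := by
        rw [hEr, Complex.norm_real, Real.norm_eq_abs]
      have h2 : K * ‖φ‖ ^ 2 ≤ K * (quad M ψ).re := mul_le_mul_of_nonneg_left hMre hK0
      rw [h1] at hqEbound
      linarith
    rw [abs_le] at habs
    constructor <;> nlinarith [habs.1, habs.2]
  obtain ⟨⟨ψM, hψM, hqM⟩, hMlb⟩ := sigMin_spec hn hMpsd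
  obtain ⟨⟨ψN, hψN, hqN⟩, hNlb⟩ := sigMin_spec hn hNpsd
  set s := sigMin M with hs
  set t := sigMin N with ht
  have hs0 : 0 ≤ s := by
    have := Complex.le_def.mp ((hMpsd.dotProduct_mulVec_nonneg ((WithLp.equiv 2 _) ψM)).trans_eq hqM)
    simpa using this.1
  have hlower : (1 - K) * s ≤ t := by
    have h1 : s ≤ (quad M ψN).re := by
      have := (Complex.le_def.mp (hMlb ψN hψN)).1
      simpa using this
    have h2 : (quad N ψN).re = t := by rw [hqN]; simp
    have h3 := (key ψN hψN).1
    nlinarith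
  have hupper : t ≤ (1 + K) * s := by
    have h1 : (quad M ψM).re = s := by rw [hqM]; simp
    have h2 : t ≤ (quad N ψM).re := by
      have := (Complex.le_def.mp (hNlb ψM hψM)).1
      simpa using this
    have h3 := (key ψM hψM).2
    nlinarith
  constructor
  · rw [← Real.sqrt_mul (by linarith : (0:ℝ) ≤ 1 - K)]
    exact Real.sqrt_le_sqrt hlower
  · rw [← Real.sqrt_mul (by linarith : (0:ℝ) ≤ 1 + K)]
    exact Real.sqrt_le_sqrt hupper
end
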